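/- arXiv:math/0003238 — 11 statements merged into one kernel-verified Lean document; each statement's English description precedes it below -/
import Mathlib

section
/- For a fixed integer q ≥ 1, the least common multiple of the integers m!/(⌊m/q⌋!)^q for 1 ≤ m ≤ n grows at most exponentially in n: there exists C > 0 such that lcm_{1 ≤ m ≤ n} (m!/(⌊m/q⌋!)^q) ≤ C^n for all n ≥ 1. -/
/-!
By Legendre's formula, `v_p(m!) - q v_p(⌊m/q⌋!) = ∑ᵢ (⌊m/pⁱ⌋ mod q)`, because
`⌊⌊m/q⌋/pⁱ⌋ = ⌊⌊m/pⁱ⌋/q⌋`. The sum has at most `log_p m` nonzero terms, each below `q`, so every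
`m!/(⌊m/q⌋!)^q` with `m ≤ n` divides `lcm(1, …, n)^(q-1)`, and Chebyshev's bound
`log lcm(1, …, n) = ψ(n) = O(n)` finishes the proof.
-/

open Finset Real Chebyshev

namespace Nat

theorem factorization_factorial_eq_mul_add_sum_mod {p : ℕ} (hp : p.Prime) (q : ℕ) {m b : ℕ}
    (hb : log p m < b) :
    (m !).factorization p = q * ((m / q)!).factorization p + ∑ i ∈ Ico 1 b, m / p ^ i % q := by
  have hb' : log p (m / q) < b := (log_mono_right (div_le_self m q)).trans_lt hb
  rw [factorization_factorial hp hb, factorization_factorial hp hb', mul_sum, ← sum_add_distrib]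
  refine sum_congr rfl fun i _ => ?_
  rw [Nat.div_right_comm, div_add_mod]

theorem factorial_div_pow_dvd_factorial (q m : ℕ) : ((m / q)!) ^ q ∣ m ! := by
  rw [← factorization_prime_le_iff_dvd (pow_ne_zero _ (factorial_ne_zero _)) (factorial_ne_zero _)]
  intro p hp
  rw [factorization_pow, Finsupp.smul_apply, smul_eq_mul,
    factorization_factorial_eq_mul_add_sum_mod hp q (lt_add_one (log p m))]
  exact Nat.le_add_right _ _

theorem factorization_factorial_div_pow_le {p q : ℕ} (hp : p.Prime) (hq : 0 < q) (m : ℕ) :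
    (m ! / ((m / q)!) ^ q).factorization p ≤ (q - 1) * log p m := by
  rw [factorization_div (factorial_div_pow_dvd_factorial q m), Finsupp.tsub_apply,
    factorization_pow, Finsupp.smul_apply, smul_eq_mul,
    factorization_factorial_eq_mul_add_sum_mod hp q (lt_add_one (log p m)), add_tsub_cancel_left]
  calc ∑ i ∈ Ico 1 (log p m + 1), m / p ^ i % q
      ≤ ∑ _i ∈ Ico 1 (log p m + 1), (q - 1) := sum_le_sum fun _ _ => le_sub_one_of_lt (mod_lt _ hq)
    _ = (q - 1) * log p m := by simp [mul_comm]

theorem factorial_div_pow_dvd_lcmUpto_pow {q m n : ℕ} (hq : 0 < q) (hmn : m ≤ n) :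
    m ! / ((m / q)!) ^ q ∣ lcmUpto n ^ (q - 1) := by
  have hne : m ! / ((m / q)!) ^ q ≠ 0 :=
    (Nat.div_pos (le_of_dvd (factorial_pos m) (factorial_div_pow_dvd_factorial q m))
      (pow_pos (factorial_pos _) q)).ne'
  rw [← factorization_prime_le_iff_dvd hne (pow_ne_zero _ (lcmUpto_ne_zero n))]
  intro p hp
  rw [factorization_pow, Finsupp.smul_apply, smul_eq_mul, factorization_lcmUpto n hp]
  exact (factorization_factorial_div_pow_le hp hq m).trans
    (Nat.mul_le_mul_left _ (log_mono_right hmn))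

theorem lcmUpto_le_exp (n : ℕ) : (lcmUpto n : ℝ) ≤ exp ((Real.log 4 + 4) * n) := by
  rw [← Real.exp_log (cast_pos.mpr (lcmUpto_pos n)), ← psi_eq_log_lcmUpto]
  exact exp_le_exp.mpr (psi_le_const_mul_self n.cast_nonneg)

end Nat

/-- For fixed `q ≥ 1`, the lcm of the integers `m!/(⌊m/q⌋!)^q` for `1 ≤ m ≤ n`
grows at most exponentially in `n`. -/
theorem lcm_factorial_ratio_exponential_growth (q : ℕ) (hq : 1 ≤ q) :
    ∃ C : ℝ, 0 < C ∧ ∀ n : ℕ, 1 ≤ n →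
      (((Finset.Icc 1 n).lcm fun m => m.factorial / ((m / q).factorial) ^ q : ℕ) : ℝ)
        ≤ C ^ n := by
  refine ⟨exp ((log 4 + 4) * (q - 1 : ℕ)), exp_pos _, fun n _ => ?_⟩
  have hdvd : ((Icc 1 n).lcm fun m => m.factorial / ((m / q).factorial) ^ q) ∣
      Nat.lcmUpto n ^ (q - 1) :=
    Finset.lcm_dvd fun m hm => Nat.factorial_div_pow_dvd_lcmUpto_pow hq (mem_Icc.mp hm).2
  calc (((Icc 1 n).lcm fun m => m.factorial / ((m / q).factorial) ^ q : ℕ) : ℝ)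
      ≤ ((Nat.lcmUpto n ^ (q - 1) : ℕ) : ℝ) :=
        mod_cast Nat.le_of_dvd (pow_pos (Nat.lcmUpto_pos n) _) hdvd
    _ ≤ exp ((log 4 + 4) * n) ^ (q - 1) := by
        push_cast
        gcongr
        exact Nat.lcmUpto_le_exp n
    _ = exp ((log 4 + 4) * (q - 1 : ℕ)) ^ n := by
        rw [← exp_nat_mul, ← exp_nat_mul]
        ring_nf
end

section
/- For a prime p and integers m ≥ 1, q ≥ 1, the p-adic valuation of m!/(⌊m/q⌋!)^q is at most q · log m / log p. In particular, if p > m then p does not divide m!/(⌊m/q⌋!)^q. -/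
/-!
By Legendre's formula the `p`-adic valuation of `m! / (⌊m/q⌋!)^q` is
`∑_{1 ≤ i ≤ log_p m} (⌊m/p^i⌋ - q ⌊⌊m/p^i⌋/q⌋) = ∑_{1 ≤ i ≤ log_p m} (⌊m/p^i⌋ mod q)`,
a sum of `⌊log_p m⌋` terms, each at most `q - 1`.
-/

section

open Nat Finset

theorem Nat.factorial_div_pow_dvd_factorial_s2 (m q : ℕ) : (m / q)! ^ q ∣ m ! := by
  have h := prod_factorial_dvd_factorial_sum (range q) fun _ ↦ m / q
  simp only [prod_const, sum_const, card_range, smul_eq_mul] at h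
  exact h.trans (factorial_dvd_factorial (Nat.mul_div_le m q))

theorem padicValNat_factorial_div_pow_factorial_div {p m b : ℕ} [Fact p.Prime] (q : ℕ)
    (hmb : log p m < b) :
    padicValNat p (m ! / (m / q)! ^ q) = ∑ i ∈ Ico 1 b, m / p ^ i % q := by
  have hqb : log p (m / q) < b := (log_mono_right (div_le_self m q)).trans_lt hmb
  have hsplit : ∀ i, q * (m / q / p ^ i) + m / p ^ i % q = m / p ^ i := fun i ↦ by
    rw [Nat.div_div_eq_div_mul m q, Nat.mul_comm q (p ^ i), ← Nat.div_div_eq_div_mul]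
    exact div_add_mod _ _
  rw [padicValNat.div_of_dvd (factorial_div_pow_dvd_factorial_s2 m q), padicValNat.pow,
    padicValNat_factorial hmb, padicValNat_factorial hqb, mul_sum,
    ← sum_congr rfl fun i _ ↦ hsplit i, sum_add_distrib, Nat.add_sub_cancel_left]

theorem padicValNat_factorial_div_pow_factorial_div_le {p m q : ℕ} [Fact p.Prime] (hq : 0 < q) :
    padicValNat p (m ! / (m / q)! ^ q) ≤ (q - 1) * log p m := by
  rw [padicValNat_factorial_div_pow_factorial_div q (lt_succ_self _)]
  calc ∑ i ∈ Ico 1 (log p m + 1), m / p ^ i % q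
      ≤ ∑ _i ∈ Ico 1 (log p m + 1), (q - 1) :=
        sum_le_sum fun i _ ↦ le_sub_one_of_lt (mod_lt _ hq)
    _ = (q - 1) * log p m := by simp [mul_comm]

end

theorem factorization_factorial_ratio_le_general (p m q : ℕ) (hp : p.Prime)
    (hq : 1 ≤ q) :
    (((m.factorial / ((m / q).factorial) ^ q).factorization p : ℕ) : ℝ)
        ≤ q * Real.log m / Real.log p ∧
      (m < p → ¬ p ∣ m.factorial / ((m / q).factorial) ^ q) := by
  have : Fact p.Prime := ⟨hp⟩
  refine ⟨?_, fun hmp hdvd ↦ ?_⟩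
  · have hval := padicValNat_factorial_div_pow_factorial_div_le (p := p) (m := m) hq
    have hlog : (Nat.log p m : ℝ) ≤ Real.log m / Real.log p := Real.natLog_le_logb m p
    rw [Nat.factorization_def _ hp]
    calc (padicValNat p (m.factorial / (m / q).factorial ^ q) : ℝ)
        ≤ ((q - 1 : ℕ) : ℝ) * Nat.log p m := by exact_mod_cast hval
      _ ≤ q * (Real.log m / Real.log p) :=
        mul_le_mul (by exact_mod_cast q.sub_le 1) hlog (Nat.cast_nonneg _) (Nat.cast_nonneg _)
      _ = q * Real.log m / Real.log p := mul_div_assoc' ..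
  · have hdvd_fact := hdvd.trans (Nat.div_dvd_of_dvd (Nat.factorial_div_pow_dvd_factorial_s2 m q))
    exact hmp.not_ge (hp.dvd_factorial.mp hdvd_fact)

/-- For a prime `p` and integers `m ≥ 1`, `q ≥ 1`, the `p`-adic valuation of
`m!/(⌊m/q⌋!)^q` is at most `q · log m / log p`; in particular if `p > m` then
`p` does not divide `m!/(⌊m/q⌋!)^q`. -/
theorem factorization_factorial_ratio_le (p m q : ℕ) (hp : p.Prime)
    (hm : 1 ≤ m) (hq : 1 ≤ q) :
    (((m.factorial / ((m / q).factorial) ^ q).factorization p : ℕ) : ℝ)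
        ≤ q * Real.log m / Real.log p ∧
      (m < p → ¬ p ∣ m.factorial / ((m / q).factorial) ^ q) :=
  factorization_factorial_ratio_le_general p m q hp hq
end

section
/- For a fixed integer u ≥ 1, the least common multiple of the integers (un)!/(n!)^u for 1 ≤ n ≤ N grows at most exponentially in N. -/
/-!
Since `(u n)! = ∏_{k < u} C((k+1) n, n) · (n!)^u`, the multinomial `(u n)!/(n!)^u` is a
product of `u` binomial coefficients `C(m, n)` with `m ≤ u n`. By Kummer, `p ^ v_p(C(m, n)) ≤ m`,
so each of them divides `lcm(1, …, M) = ∏_{p ≤ M} p ^ ⌊log_p M⌋` for `M = u N`, and the whole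
lcm divides `lcm(1, …, u N) ^ u`. Finally `lcm(1, …, M) ≤ M ^ √M · M# ≤ 16 ^ M`, because the
primes `p > √M` occur only to the first power.
-/

open Finset Nat

/-- This is `lcm(1, …, M)`. -/
def maxPrimePowerProd (M : ℕ) : ℕ := ∏ p ∈ primesLE M, p ^ log p M

lemma maxPrimePowerProd_pos (M : ℕ) : 0 < maxPrimePowerProd M :=
  prod_pos fun _ hp => pow_pos (mem_primesLE.mp hp).2.pos _

lemma dvd_maxPrimePowerProd_of_factorization_le {n M : ℕ} (hn : n ≠ 0)
    (h : ∀ p, n.factorization p ≤ log p M) : n ∣ maxPrimePowerProd M := by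
  have hsub : n.primeFactors ⊆ primesLE M := fun p hp => by
    have hfac : n.factorization p ≠ 0 := by
      rwa [← Finsupp.mem_support_iff, support_factorization]
    have hlog : 0 < log p M := (Nat.pos_of_ne_zero hfac).trans_le (h p)
    exact mem_primesLE.mpr ⟨(log_pos_iff.mp hlog).1, prime_of_mem_primeFactors hp⟩
  calc n = ∏ p ∈ n.primeFactors, p ^ n.factorization p := prod_primeFactors_pow_factorization hn
    _ ∣ ∏ p ∈ n.primeFactors, p ^ log p M :=
        prod_dvd_prod_of_dvd _ _ fun p _ => pow_dvd_pow p (h p)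
    _ ∣ maxPrimePowerProd M := prod_dvd_prod_of_subset _ _ _ hsub

lemma choose_dvd_maxPrimePowerProd {m k M : ℕ} (hk : k ≤ m) (hm : m ≤ M) :
    m.choose k ∣ maxPrimePowerProd M :=
  dvd_maxPrimePowerProd_of_factorization_le (choose_pos hk).ne' fun _ =>
    factorization_choose_le_log.trans (log_mono_right hm)

lemma factorial_mul_eq_prod_choose_mul_factorial_pow (u n : ℕ) :
    (u * n)! = (∏ k ∈ range u, ((k + 1) * n).choose n) * n ! ^ u := by
  induction u with
  | zero => simp
  | succ u ih =>
    rw [prod_range_succ, pow_succ, add_one_mul, ← add_choose_mul_factorial_mul_factorial, ih]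
    ring

lemma factorial_mul_div_factorial_pow (u n : ℕ) :
    (u * n)! / n ! ^ u = ∏ k ∈ range u, ((k + 1) * n).choose n :=
  Nat.div_eq_of_eq_mul_left (pow_pos n.factorial_pos u)
    (factorial_mul_eq_prod_choose_mul_factorial_pow u n)

lemma factorial_mul_div_factorial_pow_dvd {u n M : ℕ} (h : u * n ≤ M) :
    (u * n)! / n ! ^ u ∣ maxPrimePowerProd M ^ u := by
  rw [factorial_mul_div_factorial_pow]
  calc _ ∣ ∏ _k ∈ range u, maxPrimePowerProd M :=
        prod_dvd_prod_of_dvd _ _ fun k hk => choose_dvd_maxPrimePowerProd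
          (Nat.le_mul_of_pos_left n k.succ_pos) ((Nat.mul_le_mul_right n (mem_range.mp hk)).trans h)
    _ = maxPrimePowerProd M ^ u := by rw [prod_const, card_range]

lemma self_pow_sqrt_le_four_pow (M : ℕ) : M ^ sqrt M ≤ 4 ^ M := by
  have hM : M ≤ 4 ^ sqrt M := calc
    M ≤ (sqrt M + 1) * (sqrt M + 1) := (lt_succ_sqrt M).le
    _ ≤ 2 ^ sqrt M * 2 ^ sqrt M := Nat.mul_self_le_mul_self Nat.lt_two_pow_self
    _ = 4 ^ sqrt M := by rw [← mul_pow]; rfl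
  calc M ^ sqrt M ≤ (4 ^ sqrt M) ^ sqrt M := Nat.pow_le_pow_left hM _
    _ = 4 ^ (sqrt M * sqrt M) := (pow_mul _ _ _).symm
    _ ≤ 4 ^ M := Nat.pow_le_pow_right (by norm_num) (sqrt_le M)

lemma card_filter_mul_self_le_le_sqrt {s : Finset ℕ} (hs : 0 ∉ s) (M : ℕ) :
    #{p ∈ s | p * p ≤ M} ≤ sqrt M := by
  have hsub : {p ∈ s | p * p ≤ M} ⊆ Icc 1 (sqrt M) := fun p hp => by
    obtain ⟨hps, hpM⟩ := mem_filter.mp hp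
    exact mem_Icc.mpr ⟨pos_of_ne_zero (ne_of_mem_of_not_mem hps hs), le_sqrt.mpr hpM⟩
  simpa using card_le_card hsub

lemma pow_log_le_self_of_lt_mul_self {p M : ℕ} (hp : 0 < p) (h : M < p * p) :
    p ^ log p M ≤ p := by
  rcases Nat.eq_zero_or_pos M with rfl | hM
  · simp only [log_zero_right, pow_zero]
    exact hp
  · have : log p M < 2 := log_lt_of_lt_pow hM.ne' (by rwa [sq])
    simpa using Nat.pow_le_pow_right hp (Nat.lt_succ_iff.mp this)

lemma maxPrimePowerProd_le (M : ℕ) : maxPrimePowerProd M ≤ 16 ^ M := by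
  rcases Nat.eq_zero_or_pos M with rfl | hM
  · simp [maxPrimePowerProd]
  have hprime {p} (hp : p ∈ primesLE M) : p.Prime := (mem_primesLE.mp hp).2
  have hzero : 0 ∉ primesLE M := fun h => not_prime_zero (hprime h)
  have hsmall : ∏ p ∈ primesLE M with p * p ≤ M, M ≤ 4 ^ M := by
    rw [prod_const]
    calc M ^ #{p ∈ primesLE M | p * p ≤ M} ≤ M ^ sqrt M :=
          Nat.pow_le_pow_right hM (card_filter_mul_self_le_le_sqrt hzero M)
      _ ≤ 4 ^ M := self_pow_sqrt_le_four_pow M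
  have hlarge : ∏ p ∈ primesLE M with ¬p * p ≤ M, p ≤ 4 ^ M := calc
    _ ≤ ∏ p ∈ primesLE M, p :=
        prod_le_prod_of_subset_of_one_le' (filter_subset _ _) fun p hp _ => (hprime hp).one_le
    _ = primorial M := rfl
    _ ≤ 4 ^ M := primorial_le_four_pow M
  calc maxPrimePowerProd M ≤ ∏ p ∈ primesLE M, if p * p ≤ M then M else p :=
        prod_le_prod' fun p hp => by
          split_ifs with h
          · exact pow_log_le_self p hM.ne'
          · exact pow_log_le_self_of_lt_mul_self (hprime hp).pos (not_le.mp h)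
    _ = (∏ p ∈ primesLE M with p * p ≤ M, M) * ∏ p ∈ primesLE M with ¬p * p ≤ M, p :=
        prod_ite _ _
    _ ≤ 4 ^ M * 4 ^ M := Nat.mul_le_mul hsmall hlarge
    _ = 16 ^ M := by rw [← mul_pow]; rfl

theorem lcm_multinomial_exponential_growth_general (u : ℕ) :
    ∃ C : ℝ, 0 < C ∧ ∀ N : ℕ, 1 ≤ N →
      (((Finset.Icc 1 N).lcm fun n => (u * n).factorial / (n.factorial) ^ u : ℕ) : ℝ)
        ≤ C ^ N := by
  refine ⟨16 ^ (u * u), by positivity, fun N _ => ?_⟩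
  have hdvd : ((Icc 1 N).lcm fun n => (u * n)! / n ! ^ u) ∣ maxPrimePowerProd (u * N) ^ u :=
    lcm_dvd fun n hn => factorial_mul_div_factorial_pow_dvd
      (Nat.mul_le_mul_left u (mem_Icc.mp hn).2)
  have hle : ((Icc 1 N).lcm fun n => (u * n)! / n ! ^ u) ≤ (16 ^ (u * u)) ^ N := calc
    _ ≤ maxPrimePowerProd (u * N) ^ u := le_of_dvd (pow_pos (maxPrimePowerProd_pos _) u) hdvd
    _ ≤ (16 ^ (u * N)) ^ u := Nat.pow_le_pow_left (maxPrimePowerProd_le _) u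
    _ = (16 ^ (u * u)) ^ N := by rw [← pow_mul, ← pow_mul]; ring_nf
  exact_mod_cast hle

/-- For fixed `u ≥ 1`, the lcm of the integers `(un)!/(n!)^u` for `1 ≤ n ≤ N`
grows at most exponentially in `N`. -/
theorem lcm_multinomial_exponential_growth (u : ℕ) (hu : 1 ≤ u) :
    ∃ C : ℝ, 0 < C ∧ ∀ N : ℕ, 1 ≤ N →
      (((Finset.Icc 1 N).lcm fun n => (u * n).factorial / (n.factorial) ^ u : ℕ) : ℝ)
        ≤ C ^ N :=
  lcm_multinomial_exponential_growth_general u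
end

section
/- Let a, b be rational numbers with b not a nonpositive integer and a not a nonpositive integer. Then the common denominator of the rationals (a)_0/(b)_0, (a)_1/(b)_1, …, (a)_n/(b)_n grows at most geometrically in n: there exists C > 0 such that the least d_n ∈ ℕ with d_n (a)_m/(b)_m ∈ ℤ for all m ≤ n satisfies d_n ≤ C^n. -/
/-!
Write `a = A/α` and `b = B/β` in lowest terms, so that
`(a)_m / (b)_m = β^m ∏_{i<m} (A + iα) / (α^m ∏_{i<m} (B + iβ))`.
Among `m` consecutive terms of an arithmetic progression whose difference is prime to `p`, the
number divisible by `p^k` is `⌊m/p^k⌋` or `⌊m/p^k⌋ + 1`. Comparing with Legendre's formula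
gives `m! ∣ α^m ∏ (A + iα)` and, since `p ∣ β` never divides `B + iβ`,
`∏ (B + iβ) ∣ m! · lcm(1, …, X)` whenever all `|B + iβ| ≤ X`. So `α^{2n} · lcm(1, …, X)` clears
the denominators for all `m ≤ n`, and `lcm(1, …, X) ≤ primorial X · X^{√X} ≤ 16^X` with `X`
linear in `n`.
-/

open Finset Nat

theorem exists_dvd_add_mul_iff_modEq {q : ℕ} [NeZero q] {B β : ℤ} (h : IsCoprime β q) :
    ∃ v : ℕ, ∀ i : ℕ, (q : ℤ) ∣ B + i * β ↔ i ≡ v [MOD q] := by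
  obtain ⟨u, w, huw⟩ := h
  refine ⟨((-B * u : ℤ) : ZMod q).val, fun i => ?_⟩
  have hu : (u : ZMod q) * β = 1 := by
    simpa using congrArg (Int.cast : ℤ → ZMod q) huw
  rw [← ZMod.intCast_zmod_eq_zero_iff_dvd, ← ZMod.natCast_eq_natCast_iff, ZMod.natCast_val,
    ZMod.cast_id', id]
  push_cast
  constructor <;> intro h
  · linear_combination u * h - (i : ZMod q) * hu
  · linear_combination (β : ZMod q) * h - (B : ZMod q) * hu

theorem card_filter_dvd_add_mul_bounds {q : ℕ} (hq : 0 < q) {B β : ℤ} (h : IsCoprime β q)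
    (m : ℕ) :
    m / q ≤ #{i ∈ range m | q ∣ (B + (i : ℕ) * β).natAbs} ∧
      #{i ∈ range m | q ∣ (B + (i : ℕ) * β).natAbs} ≤ m / q + 1 := by
  have : NeZero q := ⟨hq.ne'⟩
  obtain ⟨v, hv⟩ := exists_dvd_add_mul_iff_modEq (B := B) h
  rw [filter_congr fun i _ => Int.natCast_dvd.symm.trans (hv i), ← count_eq_card_filter_range,
    count_modEq_card (b := m) hq v]
  split_ifs <;> omega

theorem Int.natAbs_prod {ι : Type*} (s : Finset ι) (f : ι → ℤ) :
    (∏ i ∈ s, f i).natAbs = ∏ i ∈ s, (f i).natAbs :=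
  map_prod Int.natAbsHom f s

theorem Nat.factorization_prod_eq_sum_card_filter {ι : Type*} {s : Finset ι} {f : ι → ℕ}
    {p b : ℕ} (hp : p.Prime) (hf : ∀ i ∈ s, 0 < f i) (hb : ∀ i ∈ s, f i < p ^ b) :
    (∏ i ∈ s, f i).factorization p = ∑ k ∈ Ico 1 b, #{i ∈ s | p ^ k ∣ f i} := by
  rw [factorization_prod_apply fun i hi => (hf i hi).ne',
    sum_congr rfl fun i hi => factorization_eq_card_pow_dvd_of_lt hp (hf i hi) (hb i hi)]
  simp only [card_filter]
  exact sum_comm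

theorem factorization_factorial_le_prod_add_mul {p : ℕ} (hp : p.Prime) {A α : ℤ}
    (hα : IsCoprime α p) {m : ℕ} (hprod : ∏ i ∈ range m, (A + i * α) ≠ 0) :
    (m !).factorization p ≤ (∏ i ∈ range m, (A + i * α)).natAbs.factorization p := by
  set P := (∏ i ∈ range m, (A + i * α)).natAbs with hPdef
  have hterm (i) (hi : i ∈ range m) : 0 < (A + i * α).natAbs :=
    Int.natAbs_pos.mpr (prod_ne_zero_iff.mp hprod i hi)
  have hP : 0 < P := Int.natAbs_pos.mpr hprod
  -- one exponent `b` large enough for Legendre's formula and for every term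
  set b := P + m + 1
  have hpow {y : ℕ} (hy : y ≤ P + m) : y < p ^ b :=
    hy.trans_lt ((Nat.lt_pow_self hp.one_lt).trans_le (Nat.pow_le_pow_right hp.pos (by omega)))
  have hb (i) (hi : i ∈ range m) : (A + i * α).natAbs < p ^ b :=
    hpow ((le_of_dvd hP (Int.natAbs_dvd_natAbs.mpr (dvd_prod_of_mem _ hi))).trans (by omega))
  rw [factorization_factorial hp (log_lt_of_lt_pow' (by omega) (hpow (by omega))), hPdef,
    Int.natAbs_prod, factorization_prod_eq_sum_card_filter hp hterm hb]
  refine sum_le_sum fun k _ => (card_filter_dvd_add_mul_bounds (pow_pos hp.pos k) ?_ m).1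
  rw [Nat.cast_pow]
  exact hα.pow_right

theorem factorization_prod_add_mul_le {p : ℕ} (hp : p.Prime) {B β : ℤ} (hβ : IsCoprime β p)
    {m X : ℕ} (hne : ∀ i < m, B + i * β ≠ 0) (hX : ∀ i < m, (B + i * β).natAbs ≤ X) :
    (∏ i ∈ range m, (B + i * β)).natAbs.factorization p ≤ (m !).factorization p + log p X := by
  set K := log p X
  have hterm (i) (hi : i ∈ range m) : 0 < (B + i * β).natAbs :=
    Int.natAbs_pos.mpr (hne i (mem_range.mp hi))
  have hb (i) (hi : i ∈ range m) : (B + i * β).natAbs < p ^ (K + 1) :=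
    (hX i (mem_range.mp hi)).trans_lt (lt_pow_succ_log_self hp.one_lt X)
  rw [Int.natAbs_prod, factorization_prod_eq_sum_card_filter hp hterm hb]
  calc ∑ k ∈ Ico 1 (K + 1), #{i ∈ range m | p ^ k ∣ (B + (i : ℕ) * β).natAbs}
      ≤ ∑ k ∈ Ico 1 (K + 1), (m / p ^ k + 1) := by
        refine sum_le_sum fun k _ => (card_filter_dvd_add_mul_bounds (pow_pos hp.pos k) ?_ m).2
        rw [Nat.cast_pow]
        exact hβ.pow_right
    _ = ∑ k ∈ Ico 1 (K + 1), m / p ^ k + K := by simp [sum_add_distrib]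
    _ ≤ (m !).factorization p + K := by
        rw [factorization_factorial hp (n := m) (b := K + log p m + 1) (by omega)]
        gcongr
        omega

theorem factorial_dvd_pow_mul_prod_add_mul (A α : ℤ) (m : ℕ) :
    ((m ! : ℕ) : ℤ) ∣ α ^ m * ∏ i ∈ range m, (A + i * α) := by
  set P := ∏ i ∈ range m, (A + i * α)
  rcases eq_or_ne (α ^ m * P) 0 with h0 | h0
  · rw [h0]
    exact dvd_zero _
  obtain ⟨hαm, hP⟩ := mul_ne_zero_iff.mp h0
  replace hαm := Int.natAbs_ne_zero.mpr hαm
  replace hP := Int.natAbs_ne_zero.mpr hP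
  rw [Int.natCast_dvd, Int.natAbs_mul,
    ← factorization_prime_le_iff_dvd (factorial_ne_zero m) (mul_ne_zero hαm hP)]
  intro p hp
  rw [Nat.factorization_mul hαm hP, Finsupp.add_apply]
  by_cases hpα : (p : ℤ) ∣ α
  · have hpm : p ^ m ∣ (α ^ m).natAbs := by
      rw [Int.natAbs_pow]
      exact pow_dvd_pow_of_dvd (Int.natCast_dvd.mp hpα) m
    calc (m !).factorization p ≤ m / (p - 1) := factorization_factorial_le_div_pred hp m
      _ ≤ m := Nat.div_le_self _ _
      _ ≤ (α ^ m).natAbs.factorization p := (hp.pow_dvd_iff_le_factorization hαm).mp hpm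
      _ ≤ _ := le_add_right le_rfl
  · have hcop : IsCoprime α p := ((Nat.prime_iff_prime_int.mp hp).coprime_iff_not_dvd.mpr hpα).symm
    exact le_add_left (factorization_factorial_le_prod_add_mul hp hcop (Int.natAbs_ne_zero.mp hP))

/-- `∏_{p ≤ X} p ^ ⌊log_p X⌋`, that is, `lcm (1, …, X)`. -/
def maxPrimePowProd (X : ℕ) : ℕ := ∏ p ∈ range (X + 1) with p.Prime, p ^ log p X

theorem maxPrimePowProd_pos (X : ℕ) : 0 < maxPrimePowProd X :=
  prod_pos fun _ hp => pow_pos (mem_filter.mp hp).2.pos _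

theorem pow_log_dvd_maxPrimePowProd {p : ℕ} (hp : p.Prime) (X : ℕ) :
    p ^ log p X ∣ maxPrimePowProd X := by
  rcases le_or_gt p X with hpX | hXp
  · exact dvd_prod_of_mem _ (mem_filter.mpr ⟨mem_range.mpr (lt_succ_of_le hpX), hp⟩)
  · simp [log_of_lt hXp]

theorem Nat.pow_sqrt_le_four_pow (X : ℕ) : X ^ sqrt X ≤ 4 ^ X := by
  have hX : X ≤ 4 ^ sqrt X := calc
    X ≤ (sqrt X + 1) ^ 2 := (lt_succ_sqrt' X).le
    _ ≤ (2 ^ sqrt X) ^ 2 := Nat.pow_le_pow_left Nat.lt_two_pow_self 2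
    _ = 4 ^ sqrt X := by rw [← pow_mul, mul_comm, pow_mul]; norm_num
  calc X ^ sqrt X ≤ (4 ^ sqrt X) ^ sqrt X := Nat.pow_le_pow_left hX _
    _ = 4 ^ (sqrt X * sqrt X) := (pow_mul _ _ _).symm
    _ ≤ 4 ^ X := Nat.pow_le_pow_right (by norm_num) (sqrt_le X)

theorem maxPrimePowProd_le_primorial_mul (X : ℕ) :
    maxPrimePowProd X ≤ primorial X * X ^ sqrt X := by
  rcases X.eq_zero_or_pos with rfl | hX
  · decide
  have hfactor (p : ℕ) (hp : p.Prime) : p ^ log p X ≤ p * if p ≤ sqrt X then X else 1 := by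
    split_ifs with hpX
    · exact (pow_log_le_self p hX.ne').trans (Nat.le_mul_of_pos_left X hp.pos)
    · have hlog : log p X < 2 :=
        log_lt_of_lt_pow hX.ne' (by rw [pow_two]; exact lt_of_not_ge (mt le_sqrt.mpr hpX))
      simpa using Nat.pow_le_pow_right hp.pos (le_of_lt_succ hlog)
  have hcard : #{p ∈ {p ∈ range (X + 1) | p.Prime} | p ≤ sqrt X} ≤ sqrt X := by
    calc _ ≤ #(Icc 1 (sqrt X)) := card_le_card fun p hp => by
          simp only [mem_filter] at hp
          exact mem_Icc.mpr ⟨hp.1.2.pos, hp.2⟩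
      _ = sqrt X := by simp
  calc maxPrimePowProd X
      ≤ ∏ p ∈ range (X + 1) with p.Prime, p * if p ≤ sqrt X then X else 1 :=
        prod_le_prod' fun p hp => hfactor p (mem_filter.mp hp).2
    _ = primorial X * X ^ #{p ∈ {p ∈ range (X + 1) | p.Prime} | p ≤ sqrt X} := by
        rw [prod_mul_distrib, ← prod_filter, prod_const, primorial]
    _ ≤ primorial X * X ^ sqrt X := Nat.mul_le_mul_left _ (Nat.pow_le_pow_right hX hcard)

theorem maxPrimePowProd_le (X : ℕ) : maxPrimePowProd X ≤ 16 ^ X := calc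
  maxPrimePowProd X ≤ primorial X * X ^ sqrt X := maxPrimePowProd_le_primorial_mul X
  _ ≤ 4 ^ X * 4 ^ X := Nat.mul_le_mul (primorial_le_four_pow X) (pow_sqrt_le_four_pow X)
  _ = 16 ^ X := by rw [← mul_pow]; rfl

theorem prod_add_mul_dvd_factorial_mul_maxPrimePowProd {B β : ℤ} (hcop : IsCoprime B β)
    {m X : ℕ} (hne : ∀ i < m, B + i * β ≠ 0) (hX : ∀ i < m, (B + i * β).natAbs ≤ X) :
    ∏ i ∈ range m, (B + i * β) ∣ ((m ! * maxPrimePowProd X : ℕ) : ℤ) := by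
  set P := ∏ i ∈ range m, (B + i * β)
  have hP : P.natAbs ≠ 0 :=
    Int.natAbs_ne_zero.mpr (prod_ne_zero_iff.mpr fun i hi => hne i (mem_range.mp hi))
  have hL := (maxPrimePowProd_pos X).ne'
  rw [← Int.natAbs_dvd_natAbs, Int.natAbs_natCast,
    ← factorization_prime_le_iff_dvd hP (mul_ne_zero (factorial_ne_zero m) hL)]
  intro p hp
  have hpZ := Nat.prime_iff_prime_int.mp hp
  rw [Nat.factorization_mul (factorial_ne_zero m) hL, Finsupp.add_apply]
  by_cases hpβ : (p : ℤ) ∣ β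
  · -- every term `B + iβ` is then a unit mod `p`
    have hcopP : IsCoprime (p : ℤ) P := IsCoprime.symm <| IsCoprime.prod_left fun i _ =>
      (hcop.add_mul_right_left (i : ℤ)).of_isCoprime_of_dvd_right hpβ
    rw [factorization_eq_zero_of_not_dvd (Int.natCast_dvd.not.mp
      (hpZ.coprime_iff_not_dvd.mp hcopP))]
    exact zero_le _
  · have hcopβ : IsCoprime β p := (hpZ.coprime_iff_not_dvd.mpr hpβ).symm
    calc P.natAbs.factorization p ≤ (m !).factorization p + log p X :=
          factorization_prod_add_mul_le hp hcopβ hne hX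
      _ ≤ _ := Nat.add_le_add_left ((hp.pow_dvd_iff_le_factorization hL).mp
          (pow_log_dvd_maxPrimePowProd hp X)) _

theorem ascPochhammer_eval_eq_prod_range {R : Type*} [CommSemiring R] (x : R) (m : ℕ) :
    (ascPochhammer R m).eval x = ∏ i ∈ range m, (x + i) := by
  induction m with
  | zero => simp
  | succ m ih => rw [ascPochhammer_succ_eval, ih, prod_range_succ]

theorem Rat.ascPochhammer_eval_eq_num_div (x : ℚ) (m : ℕ) :
    (ascPochhammer ℚ m).eval x =
      ((∏ i ∈ range m, (x.num + i * x.den) : ℤ) : ℚ) / (x.den : ℚ) ^ m := by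
  rw [eq_div_iff (by positivity), ascPochhammer_eval_eq_prod_range]
  nth_rewrite 2 [← card_range m]
  rw [prod_mul_pow_card, Int.cast_prod]
  refine prod_congr rfl fun i _ => ?_
  push_cast
  rw [add_mul, Rat.mul_den_eq_num]

theorem Rat.num_add_mul_den_ne_zero {b : ℚ} {i : ℕ} (hb : b ≠ -i) : b.num + i * b.den ≠ 0 := by
  intro h
  apply hb
  have hden : (b.den : ℚ) ≠ 0 := by positivity
  apply mul_right_cancel₀ hden
  rw [Rat.mul_den_eq_num]
  linear_combination (by exact_mod_cast h : (b.num : ℚ) + i * b.den = 0)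

theorem Rat.natAbs_num_add_mul_den_le (b : ℚ) {i n : ℕ} (hi : i < n) :
    (b.num + i * b.den).natAbs ≤ (b.num.natAbs + b.den) * n := calc
  (b.num + i * b.den).natAbs ≤ b.num.natAbs + i * b.den := by
    simpa [Int.natAbs_mul] using Int.natAbs_add_le b.num (i * b.den)
  _ ≤ (b.num.natAbs + b.den) * n := by
    have h1 := Nat.mul_le_mul_left b.num.natAbs (show 1 ≤ n by omega)
    have h2 := Nat.mul_le_mul_right b.den hi.le
    nlinarith

theorem exists_int_eq_mul_ascPochhammer_div (a : ℚ) {b : ℚ} (hb : ∀ k : ℕ, b ≠ -(k : ℚ))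
    {m n X : ℕ} (hmn : m ≤ n) (hX : ∀ i < m, (b.num + i * b.den).natAbs ≤ X) :
    ∃ z : ℤ, ((a.den ^ (2 * n) * maxPrimePowProd X : ℕ) : ℚ) *
      ((ascPochhammer ℚ m).eval a / (ascPochhammer ℚ m).eval b) = z := by
  have hne (i : ℕ) (_ : i < m) := Rat.num_add_mul_den_ne_zero (hb i)
  obtain ⟨s, hs⟩ := factorial_dvd_pow_mul_prod_add_mul a.num a.den m
  obtain ⟨r, hr⟩ := prod_add_mul_dvd_factorial_mul_maxPrimePowProd b.isCoprime_num_den hne hX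
  obtain ⟨k, rfl⟩ := Nat.exists_eq_add_of_le hmn
  refine ⟨a.den ^ (2 * k) * b.den ^ m * s * r, ?_⟩
  have hN : ((∏ i ∈ range m, (b.num + i * b.den) : ℤ) : ℚ) ≠ 0 :=
    Int.cast_ne_zero.mpr (prod_ne_zero_iff.mpr fun i hi => hne i (mem_range.mp hi))
  have hsQ := congrArg (Int.cast : ℤ → ℚ) hs
  have hrQ := congrArg (Int.cast : ℤ → ℚ) hr
  rw [Rat.ascPochhammer_eval_eq_num_div, Rat.ascPochhammer_eval_eq_num_div]
  push_cast at hsQ hrQ hN ⊢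
  field_simp
  linear_combination (a.den : ℚ) ^ (m + 2 * k) * maxPrimePowProd X * hsQ
    + (a.den : ℚ) ^ (m + 2 * k) * s * hrQ

theorem pochhammer_ratio_denominator_growth_general (a b : ℚ)
    (hb : ∀ k : ℕ, b ≠ -(k : ℚ)) :
    ∃ C : ℝ, 0 < C ∧ ∀ n : ℕ, ∃ d : ℕ, 0 < d ∧ (d : ℝ) ≤ C ^ n ∧
      ∀ m ≤ n,
        ((d : ℚ) * ((ascPochhammer ℚ m).eval a / (ascPochhammer ℚ m).eval b)).den = 1 := by
  set c := b.num.natAbs + b.den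
  refine ⟨(a.den ^ 2 * 16 ^ c : ℕ), by positivity, fun n => ⟨a.den ^ (2 * n) *
    maxPrimePowProd (c * n), Nat.mul_pos (by positivity) (maxPrimePowProd_pos _), ?_, ?_⟩⟩
  · have hd : a.den ^ (2 * n) * maxPrimePowProd (c * n) ≤ (a.den ^ 2 * 16 ^ c) ^ n := calc
      _ ≤ a.den ^ (2 * n) * 16 ^ (c * n) := Nat.mul_le_mul_left _ (maxPrimePowProd_le _)
      _ = (a.den ^ 2 * 16 ^ c) ^ n := by ring
    exact_mod_cast hd
  · intro m hm
    obtain ⟨z, hz⟩ := exists_int_eq_mul_ascPochhammer_div a hb hm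
      fun i hi => Rat.natAbs_num_add_mul_den_le b (hi.trans_le hm)
    rw [hz, Rat.den_intCast]

/-- For rationals `a, b`, neither a nonpositive integer, the common denominator of
`(a)_0/(b)_0, …, (a)_n/(b)_n` grows at most geometrically in `n`. -/
theorem pochhammer_ratio_denominator_growth (a b : ℚ)
    (ha : ∀ k : ℕ, a ≠ -(k : ℚ)) (hb : ∀ k : ℕ, b ≠ -(k : ℚ)) :
    ∃ C : ℝ, 0 < C ∧ ∀ n : ℕ, ∃ d : ℕ, 0 < d ∧ (d : ℝ) ≤ C ^ n ∧
      ∀ m ≤ n,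
        ((d : ℚ) * ((ascPochhammer ℚ m).eval a / (ascPochhammer ℚ m).eval b)).den = 1 :=
  pochhammer_ratio_denominator_growth_general a b hb
end

section
/- Let s = p/q be a rational number in lowest terms with q > 0, and let (a_n) be a sequence of rational numbers. Then the sequence (a_n/(n!)^s) satisfies condition (G)_conj (i.e., there is C > 0 with |a_n|/(n!)^s ≤ C^n for all n) if and only if the sequence (a_n/(⌊n/q⌋!)^p) satisfies (G)_conj (i.e., there is C' > 0 with |a_n|/(⌊n/q⌋!)^p ≤ C'^n for all n). -/
/-!
Call `u` geometrically dominated by `v` if `u n ≤ Cⁿ · v n` for some `C > 0`. For positive `v`,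
condition `(G)_conj` for `aₙ / v n` says exactly that `|aₙ|` is dominated by `v`. Domination
is transitive, and mutual domination of positive sequences survives `x ↦ x ^ r` for every
real `r`. With `m = ⌊n/q⌋` we have `(m!)^q ≤ n! ≤ (2^q q)ⁿ (m!)^q`, so `n!` and `(m!)^q`
dominate each other, hence so do `(n!)^(p/q)` and `((m!)^q)^(p/q) = (m!)^p`.
-/

open Nat

def GeomLE (u v : ℕ → ℝ) : Prop :=
  ∃ C : ℝ, 0 < C ∧ ∀ n, u n ≤ C ^ n * v n

namespace GeomLE

variable {u v w : ℕ → ℝ}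

theorem of_le (h : ∀ n, u n ≤ v n) : GeomLE u v :=
  ⟨1, one_pos, fun n => by simpa using h n⟩

theorem trans (huv : GeomLE u v) (hvw : GeomLE v w) : GeomLE u w := by
  obtain ⟨C, hC, hCn⟩ := huv
  obtain ⟨D, hD, hDn⟩ := hvw
  refine ⟨C * D, mul_pos hC hD, fun n => ?_⟩
  calc u n ≤ C ^ n * v n := hCn n
    _ ≤ C ^ n * (D ^ n * w n) := by gcongr; exact hDn n
    _ = (C * D) ^ n * w n := by ring

theorem iff_div_le_pow (hv : ∀ n, 0 < v n) :
    GeomLE u v ↔ ∃ C : ℝ, 0 < C ∧ ∀ n, u n / v n ≤ C ^ n := by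
  simp only [GeomLE, div_le_iff₀ (hv _)]

theorem rpow (h : GeomLE u v) (hu : ∀ n, 0 ≤ u n) {r : ℝ} (hr : 0 ≤ r) :
    GeomLE (fun n => u n ^ r) (fun n => v n ^ r) := by
  obtain ⟨C, hC, hCn⟩ := h
  refine ⟨C ^ r, Real.rpow_pos_of_pos hC r, fun n => ?_⟩
  have hv : 0 ≤ v n := nonneg_of_mul_nonneg_right ((hu n).trans (hCn n)) (by positivity)
  calc u n ^ r ≤ (C ^ n * v n) ^ r := Real.rpow_le_rpow (hu n) (hCn n) hr
    _ = (C ^ r) ^ n * v n ^ r := by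
      rw [Real.mul_rpow (by positivity) hv, ← Real.rpow_natCast, ← Real.rpow_natCast,
        ← Real.rpow_mul hC.le, ← Real.rpow_mul hC.le, mul_comm (n : ℝ)]

theorem inv (h : GeomLE u v) (hu : ∀ n, 0 < u n) :
    GeomLE (fun n => (v n)⁻¹) (fun n => (u n)⁻¹) := by
  obtain ⟨C, hC, hCn⟩ := h
  refine ⟨C, hC, fun n => ?_⟩
  have hv : 0 < v n := pos_of_mul_pos_right ((hu n).trans_le (hCn n)) (by positivity)
  rw [← div_eq_mul_inv, le_div_iff₀ (hu n), ← div_eq_inv_mul, div_le_iff₀ hv]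
  exact hCn n

theorem rpow_of_mutual (huv : GeomLE u v) (hvu : GeomLE v u) (hu : ∀ n, 0 < u n)
    (hv : ∀ n, 0 < v n) (r : ℝ) : GeomLE (fun n => u n ^ r) (fun n => v n ^ r) := by
  rcases le_total 0 r with hr | hr
  · exact huv.rpow (fun n => (hu n).le) hr
  · have := (hvu.inv hv).rpow (fun n => (inv_pos.2 (hu n)).le) (neg_nonneg.2 hr)
    simpa only [Real.inv_rpow (hu _).le, Real.inv_rpow (hv _).le, ← Real.rpow_neg (hu _).le,
      ← Real.rpow_neg (hv _).le, neg_neg] using this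

end GeomLE

namespace Nat

theorem factorial_pow_le_factorial_mul (m q : ℕ) : m ! ^ q ≤ (q * m)! := by
  have := prod_factorial_dvd_factorial_sum (Finset.range q) fun _ => m
  simp only [Finset.prod_const, Finset.sum_const, Finset.card_range, smul_eq_mul] at this
  exact Nat.le_of_dvd (factorial_pos _) this

theorem factorial_add_le (a b : ℕ) : (a + b)! ≤ a ! * (a + b) ^ b := by
  rw [← factorial_mul_descFactorial (Nat.le_add_left b a), Nat.add_sub_cancel]
  exact Nat.mul_le_mul_left _ (descFactorial_le_pow _ _)

theorem factorial_mul_le_factorial_pow_mul (q m : ℕ) : (q * m)! ≤ m ! ^ q * q ^ (q * m) := by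
  induction m with
  | zero => simp
  | succ m ih =>
    calc (q * (m + 1))! ≤ (q * m)! * (q * (m + 1)) ^ q := by
          simpa only [mul_add_one] using factorial_add_le (q * m) q
      _ ≤ (m ! ^ q * q ^ (q * m)) * (q * (m + 1)) ^ q := Nat.mul_le_mul_right _ ih
      _ = (m + 1)! ^ q * q ^ (q * (m + 1)) := by
          rw [factorial_succ, mul_pow, mul_pow, mul_add_one, pow_add]; ring

theorem factorial_le_pow_mul_factorial_div_pow {q : ℕ} (hq : 0 < q) (n : ℕ) :
    n ! ≤ (2 ^ q * q) ^ n * (n / q)! ^ q := by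
  have hr : n % q ≤ n := mod_le n q
  have hqm : q * (n / q) = n - n % q := by have := div_add_mod n q; omega
  have hrem : n.descFactorial (n % q) ≤ (2 ^ q) ^ n :=
    calc n.descFactorial (n % q) ≤ n ^ (n % q) := descFactorial_le_pow _ _
      _ ≤ (2 ^ n) ^ (n % q) := Nat.pow_le_pow_left n.lt_two_pow_self.le _
      _ ≤ (2 ^ n) ^ q := Nat.pow_le_pow_right Nat.one_le_two_pow (mod_lt n hq).le
      _ = (2 ^ q) ^ n := by rw [← pow_mul, ← pow_mul, mul_comm]
  have hmain : (q * (n / q))! ≤ (n / q)! ^ q * q ^ n :=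
    (factorial_mul_le_factorial_pow_mul q (n / q)).trans
      (Nat.mul_le_mul_left _ (Nat.pow_le_pow_right hq (hqm ▸ Nat.sub_le n _)))
  calc n ! = (q * (n / q))! * n.descFactorial (n % q) := by
        rw [hqm, factorial_mul_descFactorial hr]
    _ ≤ ((n / q)! ^ q * q ^ n) * (2 ^ q) ^ n := Nat.mul_le_mul hmain hrem
    _ = (2 ^ q * q) ^ n * (n / q)! ^ q := by ring

end Nat

theorem geomLE_factorial_pow_factorial_div (q : ℕ) :
    GeomLE (fun n => ((n / q)! : ℝ) ^ q) (fun n => (n ! : ℝ)) :=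
  GeomLE.of_le fun n => by
    exact_mod_cast (factorial_pow_le_factorial_mul _ q).trans
      (factorial_le (mul_comm q (n / q) ▸ div_mul_le_self n q))

theorem geomLE_factorial_factorial_div_pow {q : ℕ} (hq : 0 < q) :
    GeomLE (fun n => (n ! : ℝ)) (fun n => ((n / q)! : ℝ) ^ q) :=
  ⟨2 ^ q * q, by positivity, fun n => by
    dsimp only; exact_mod_cast factorial_le_pow_mul_factorial_div_pow hq n⟩

theorem Gconj_factorial_rpow_iff_general (p : ℤ) (q : ℕ) (hq : 0 < q) (a : ℕ → ℚ) :
    (∃ C : ℝ, 0 < C ∧ ∀ n : ℕ,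
        |(a n : ℝ)| / ((n.factorial : ℝ) ^ ((p : ℝ) / (q : ℝ))) ≤ C ^ n) ↔
      (∃ C' : ℝ, 0 < C' ∧ ∀ n : ℕ,
        |(a n : ℝ)| / (((n / q).factorial : ℝ) ^ (p : ℝ)) ≤ C' ^ n) := by
  set r : ℝ := p / q
  have hfac : ∀ n, (0 : ℝ) < n ! := fun n => mod_cast factorial_pos n
  have hpow : ∀ n : ℕ, (((n / q)! : ℝ) ^ q) ^ r = ((n / q)! : ℝ) ^ (p : ℝ) := fun n => by
    rw [← Real.rpow_natCast, ← Real.rpow_mul (hfac _).le, mul_div_cancel₀ _ (by positivity)]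
  have hnm := geomLE_factorial_factorial_div_pow hq
  have hmn := geomLE_factorial_pow_factorial_div q
  have hpos : ∀ n, (0 : ℝ) < ((n / q)! : ℝ) ^ q := fun n => pow_pos (hfac _) q
  have hX := GeomLE.rpow_of_mutual hnm hmn hfac hpos r
  have hY := GeomLE.rpow_of_mutual hmn hnm hpos hfac r
  simp only [hpow] at hX hY
  rw [← GeomLE.iff_div_le_pow fun n => Real.rpow_pos_of_pos (hfac n) _,
    ← GeomLE.iff_div_le_pow fun n => Real.rpow_pos_of_pos (hfac _) _]
  exact ⟨fun h => h.trans hX, fun h => h.trans hY⟩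

/-- Let `s = p/q` in lowest terms with `q > 0`.  A sequence `(aₙ)` of rationals satisfies
`(G)_conj` for `aₙ/(n!)^s` iff it satisfies `(G)_conj` for `aₙ/(⌊n/q⌋!)^p`. -/
theorem Gconj_factorial_rpow_iff (p : ℤ) (q : ℕ) (hq : 0 < q)
    (hcop : Int.gcd p q = 1) (a : ℕ → ℚ) :
    (∃ C : ℝ, 0 < C ∧ ∀ n : ℕ,
        |(a n : ℝ)| / ((n.factorial : ℝ) ^ ((p : ℝ) / (q : ℝ))) ≤ C ^ n) ↔
      (∃ C' : ℝ, 0 < C' ∧ ∀ n : ℕ,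
        |(a n : ℝ)| / (((n / q).factorial : ℝ) ^ (p : ℝ)) ≤ C' ^ n) :=
  Gconj_factorial_rpow_iff_general p q hq a
end

section
/- Let K be a number field embedded in ℂ and let (a_n) be a sequence in the ring of integers of K such that all archimedean absolute values of a_n are bounded by C^n for some C > 0. If infinitely many a_n are nonzero, then limsup_n |a_n|^{1/n} > 0, i.e., the power series Σ a_n z^n has finite radius of convergence. -/
/-!
A nonzero algebraic integer `x` has `1 ≤ |N(x)| ≤ |ι x| · house(x) ^ (d - 1)`, where `d = [K : ℚ]`
and `house(x)` is the largest absolute value of a conjugate of `x`. Since `house(aₙ) ≤ Cⁿ`, this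
gives `|ι aₙ| ≥ (C ^ (d - 1))⁻¹ ^ n` for the infinitely many nonzero `aₙ`, so the `n`-th roots
`|ι aₙ| ^ (1/n)` are frequently at least `(C ^ (d - 1))⁻¹`, while they are bounded above by `C`.
-/

open Filter NumberField

theorem le_limsup_rpow_one_div_of_frequently {u : ℕ → ℝ} {c C : ℝ} (hc : 0 ≤ c)
    (hu : ∀ n, 0 ≤ u n) (hC : ∀ n, u n ≤ C ^ n) (hfreq : ∃ᶠ n in atTop, c ^ n ≤ u n) :
    c ≤ limsup (fun n : ℕ => u n ^ (1 / (n : ℝ))) atTop := by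
  have hC₀ : 0 ≤ C := by simpa using (hu 1).trans (hC 1)
  have hbdd : IsBoundedUnder (· ≤ ·) atTop fun n : ℕ => u n ^ (1 / (n : ℝ)) := by
    refine isBoundedUnder_of_eventually_le (a := C) ?_
    filter_upwards [eventually_ne_atTop 0] with n hn
    calc u n ^ (1 / (n : ℝ)) ≤ (C ^ n) ^ (1 / (n : ℝ)) := by gcongr; exacts [hu n, hC n]
      _ = C := by rw [one_div, Real.pow_rpow_inv_natCast hC₀ hn]
  refine le_limsup_of_frequently_le ?_ hbdd
  refine (hfreq.and_eventually (eventually_ne_atTop 0)).mono fun n ⟨hn, hn₀⟩ => ?_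
  calc c = (c ^ n) ^ (1 / (n : ℝ)) := by rw [one_div, Real.pow_rpow_inv_natCast hc hn₀]
    _ ≤ u n ^ (1 / (n : ℝ)) := by gcongr

namespace NumberField

variable {K : Type*} [Field K] [NumberField K]

theorem RingOfIntegers.one_le_norm_norm {x : 𝓞 K} (hx : x ≠ 0) :
    1 ≤ ‖Algebra.norm ℚ (x : K)‖ := by
  have hnorm : Algebra.norm ℤ x ≠ 0 := Algebra.norm_ne_zero_iff.mpr hx
  rw [← Algebra.coe_norm_int, Int.norm_cast_rat, Int.norm_eq_abs, ← Int.cast_abs]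
  exact_mod_cast Int.one_le_abs hnorm

theorem house_le_iff (x : K) (r : ℝ) : house x ≤ r ↔ ∀ φ : K →+* ℂ, ‖φ x‖ ≤ r :=
  canonicalEmbedding.norm_le_iff x r

theorem RingOfIntegers.one_le_norm_mul_house_pow {x : 𝓞 K} (hx : x ≠ 0) (σ : K →+* ℂ) :
    1 ≤ ‖σ x‖ * house (x : K) ^ (Module.finrank ℚ K - 1) :=
  (one_le_norm_norm hx).trans (norm_norm_le_norm_mul_house_pow _ σ)

end NumberField

/-- If `(aₙ)` is a sequence of algebraic integers in a number field `K` all of whose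
archimedean absolute values are bounded by `Cⁿ`, and infinitely many `aₙ` are nonzero,
then `limsup |aₙ|^{1/n} > 0` (the series `Σ aₙ zⁿ` has finite radius of convergence). -/
theorem limsup_pos_of_algebraic_integer_coeffs (K : Type*) [Field K] [NumberField K]
    (ι : K →+* ℂ) (a : ℕ → 𝓞 K) (C : ℝ) (hC : 0 < C)
    (hbound : ∀ n : ℕ, ∀ φ : K →+* ℂ, ‖φ (a n : K)‖ ≤ C ^ n)
    (hinf : {n : ℕ | a n ≠ 0}.Infinite) :
    0 < Filter.atTop.limsup fun n : ℕ =>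
      ‖ι (a n : K)‖ ^ (1 / (n : ℝ)) := by
  set D := C ^ (Module.finrank ℚ K - 1)
  have hD : 0 < D := by positivity
  have hfreq : ∃ᶠ n in atTop, D⁻¹ ^ n ≤ ‖ι (a n : K)‖ := by
    refine Nat.frequently_atTop_iff_infinite.mpr (hinf.mono fun n hn => ?_)
    have hhouse : house (a n : K) ≤ C ^ n := (house_le_iff _ _).mpr (hbound n)
    rw [Set.mem_ofPred_eq, inv_pow, inv_le_iff_one_le_mul₀ (by positivity)]
    calc 1 ≤ ‖ι (a n : K)‖ * house (a n : K) ^ (Module.finrank ℚ K - 1) :=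
          RingOfIntegers.one_le_norm_mul_house_pow hn ι
      _ ≤ ‖ι (a n : K)‖ * (C ^ n) ^ (Module.finrank ℚ K - 1) := by
          gcongr; exact house_nonneg _
      _ = ‖ι (a n : K)‖ * D ^ n := by rw [← pow_mul, ← pow_mul, mul_comm n]
  exact (inv_pos.mpr hD).trans_le <| le_limsup_rpow_one_div_of_frequently (inv_nonneg.mpr hD.le)
    (fun _ => norm_nonneg _) (fun n => hbound n ι) hfreq
end

section
/- Let s be a rational number, let u ≥ 1 be an integer, and let f(z) = Σ_{n≥0} a_n z^n be a power series with rational coefficients. Then the series f is Gevrey of order s of arithmetic type if and only if φ_u f(z) = Σ_{n≥0} a_n z^{un} is Gevrey of order s/u of arithmetic type. -/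
/-- lcm of 1..n -/
def lcmUpTo : ℕ → ℕ
  | 0 => 1
  | (n+1) => Nat.lcm (lcmUpTo n) (n+1)

lemma lcmUpTo_ne_zero (n : ℕ) : lcmUpTo n ≠ 0 := by
  induction n with
  | zero => simp [lcmUpTo]
  | succ n ih => exact Nat.lcm_ne_zero ih (Nat.succ_ne_zero n)

lemma dvd_lcmUpTo {k n : ℕ} (hk : 1 ≤ k) (hkn : k ≤ n) : k ∣ lcmUpTo n := by
  induction n with
  | zero => omega
  | succ n ih =>
    rcases Nat.le_succ_iff.mp hkn with h | h
    · exact (ih h).trans (Nat.dvd_lcm_left _ _)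
    · exact h ▸ Nat.dvd_lcm_right _ _

lemma lcmUpTo_dvd_lcmUpTo {a b : ℕ} (h : a ≤ b) : lcmUpTo a ∣ lcmUpTo b := by
  induction b with
  | zero => simp_all
  | succ b ih =>
    rcases Nat.le_succ_iff.mp h with h' | h'
    · exact (ih h').trans (Nat.dvd_lcm_left _ _)
    · exact h' ▸ dvd_rfl

lemma log_le_factorization_lcmUpTo {p n : ℕ} (hp : p.Prime) (hn : 1 ≤ n) :
    Nat.log p n ≤ (lcmUpTo n).factorization p := by
  rw [← Nat.Prime.pow_dvd_iff_le_factorization hp (lcmUpTo_ne_zero n)]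
  exact dvd_lcmUpTo (Nat.one_le_pow _ _ hp.pos) (Nat.pow_log_le_self p (by omega))

lemma pow_factorization_lcmUpTo_le {p n : ℕ} (hp : p.Prime) (hn : 1 ≤ n) :
    p ^ ((lcmUpTo n).factorization p) ≤ n := by
  induction n with
  | zero => omega
  | succ n ih =>
    show p ^ (Nat.lcm (lcmUpTo n) (n+1)).factorization p ≤ n + 1
    rw [Nat.factorization_lcm (lcmUpTo_ne_zero n) (Nat.succ_ne_zero n)]
    rcases Nat.eq_zero_or_pos n with h0 | h0
    · subst h0
      simp only [Finsupp.sup_apply]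
      have : (lcmUpTo 0).factorization p = 0 := by simp [lcmUpTo]
      rw [this]
      have h1 : (1:ℕ).factorization p = 0 := by simp
      simp [h1]
    · simp only [Finsupp.sup_apply]
      rcases Nat.le_total ((lcmUpTo n).factorization p) ((n+1 : ℕ).factorization p) with h | h
      · rw [Nat.max_eq_right h]
        exact Nat.ordProj_le p (Nat.succ_ne_zero n)
      · rw [Nat.max_eq_left h]
        exact (ih h0).trans (Nat.le_succ n)

lemma log2_add_one_le {n : ℕ} (hn : 1 ≤ n) : Nat.log 2 n + 1 ≤ 2 * Nat.sqrt n := by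
  set k := Nat.log 2 n with hk
  have h1 : 2 ^ (k/2) ≤ Nat.sqrt n := by
    rw [Nat.le_sqrt]
    calc 2 ^ (k/2) * 2 ^ (k/2) = 2 ^ (k/2 + k/2) := (pow_add 2 _ _).symm
    _ ≤ 2 ^ k := Nat.pow_le_pow_right (by norm_num) (by omega)
    _ ≤ n := Nat.pow_log_le_self 2 (by omega)
  have h2 : k / 2 + 1 ≤ 2 ^ (k/2) := Nat.lt_two_pow_self
  omega

lemma pow_sqrt_le {n : ℕ} : n ^ Nat.sqrt n ≤ 4 ^ n := by
  rcases Nat.eq_zero_or_pos n with h0 | h0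
  · subst h0; simp
  calc n ^ Nat.sqrt n ≤ (2 ^ (Nat.log 2 n + 1)) ^ Nat.sqrt n := by
        exact Nat.pow_le_pow_left (Nat.lt_pow_succ_log_self (by norm_num) n).le _
    _ = 2 ^ ((Nat.log 2 n + 1) * Nat.sqrt n) := by rw [← pow_mul]
    _ ≤ 2 ^ (2 * n) := by
        apply Nat.pow_le_pow_right (by norm_num)
        calc (Nat.log 2 n + 1) * Nat.sqrt n ≤ (2 * Nat.sqrt n) * Nat.sqrt n :=
              Nat.mul_le_mul_right _ (log2_add_one_le h0)
          _ = 2 * (Nat.sqrt n * Nat.sqrt n) := by ring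
          _ ≤ 2 * n := Nat.mul_le_mul_left 2 (Nat.sqrt_le n)
    _ = 4 ^ n := by rw [pow_mul]; norm_num

lemma lcmUpTo_le (n : ℕ) : lcmUpTo n ≤ 16 ^ n := by
  rcases Nat.eq_zero_or_pos n with h0 | h0
  · subst h0; simp [lcmUpTo]
  set L := lcmUpTo n with hLdef
  have hL : L ≠ 0 := lcmUpTo_ne_zero n
  set v := L.factorization with hv
  set S := v.support with hS
  have hprime : ∀ p ∈ S, p.Prime := fun p hp => Nat.prime_of_mem_primeFactors (by rwa [← Nat.support_factorization])
  have hvpos : ∀ p ∈ S, 1 ≤ v p := fun p hp => Nat.one_le_iff_ne_zero.mpr (Finsupp.mem_support_iff.mp hp)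
  have hple : ∀ p ∈ S, p ^ v p ≤ n := fun p hp => pow_factorization_lcmUpTo_le (hprime p hp) h0
  have hLprod : L = ∏ p ∈ S, p ^ v p := (Nat.factorization_prod_pow_eq_self hL).symm
  have hsplit : L = (∏ p ∈ S, p) * ∏ p ∈ S, p ^ (v p - 1) := by
    rw [hLprod, ← Finset.prod_mul_distrib]
    apply Finset.prod_congr rfl
    intro p hp
    have h1 : 1 ≤ v p := hvpos p hp
    rw [← pow_succ']
    congr 1
    omega
  have h1 : (∏ p ∈ S, p) ≤ primorial n := by
    apply Finset.prod_le_prod_of_subset_of_one_le'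
    · intro p hp
      simp only [Finset.mem_filter, Finset.mem_range]
      refine ⟨?_, hprime p hp⟩
      have := hple p hp
      have hpp : p ≤ p ^ v p := Nat.le_self_pow (by have := hvpos p hp; omega) p
      omega
    · intro p hp _
      exact (Finset.mem_filter.mp hp).2.pos
  have h2 : (∏ p ∈ S, p ^ (v p - 1)) ≤ n ^ Nat.sqrt n := by
    have heq : (∏ p ∈ S, p ^ (v p - 1)) = ∏ p ∈ S.filter (fun p => 2 ≤ v p), p ^ (v p - 1) := by
      symm
      apply Finset.prod_subset (Finset.filter_subset _ _)
      intro p hp hnp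
      have h1 : 1 ≤ v p := hvpos p hp
      have h2 : ¬ (2 ≤ v p) := by
        intro h; exact hnp (Finset.mem_filter.mpr ⟨hp, h⟩)
      have : v p - 1 = 0 := by omega
      rw [this, pow_zero]
    rw [heq]
    calc (∏ p ∈ S.filter (fun p => 2 ≤ v p), p ^ (v p - 1))
        ≤ n ^ (S.filter (fun p => 2 ≤ v p)).card := by
          apply Finset.prod_le_pow_card
          intro p hp
          obtain ⟨hpS, hv2⟩ := Finset.mem_filter.mp hp
          calc p ^ (v p - 1) ≤ p ^ v p := Nat.pow_le_pow_right (hprime p hpS).pos (by omega)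
            _ ≤ n := hple p hpS
      _ ≤ n ^ Nat.sqrt n := by
          apply Nat.pow_le_pow_right (by omega)
          have hsub : S.filter (fun p => 2 ≤ v p) ⊆ Finset.Icc 2 (Nat.sqrt n) := by
            intro p hp
            obtain ⟨hpS, hv2⟩ := Finset.mem_filter.mp hp
            rw [Finset.mem_Icc]
            refine ⟨(hprime p hpS).two_le, ?_⟩
            rw [Nat.le_sqrt']
            calc p ^ 2 ≤ p ^ v p := Nat.pow_le_pow_right (hprime p hpS).pos hv2
              _ ≤ n := hple p hpS
          calc (S.filter (fun p => 2 ≤ v p)).card ≤ (Finset.Icc 2 (Nat.sqrt n)).card :=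
                Finset.card_le_card hsub
            _ = Nat.sqrt n + 1 - 2 := Nat.card_Icc 2 _
            _ ≤ Nat.sqrt n := by omega
  calc L = (∏ p ∈ S, p) * ∏ p ∈ S, p ^ (v p - 1) := hsplit
    _ ≤ primorial n * n ^ Nat.sqrt n := Nat.mul_le_mul h1 h2
    _ ≤ 4 ^ n * 4 ^ n := Nat.mul_le_mul (primorial_le_4_pow n) pow_sqrt_le
    _ = 16 ^ n := by rw [← Nat.mul_pow]

lemma fact_pow_dvd (g n : ℕ) : n.factorial ^ g ∣ (g * n).factorial := by
  induction g with
  | zero => simp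
  | succ g ih =>
    have h1 : (g*n).factorial * n.factorial ∣ (g*n + n).factorial :=
      Nat.factorial_mul_factorial_dvd_factorial_add _ _
    calc n.factorial ^ (g+1) = n.factorial ^ g * n.factorial := by ring
      _ ∣ (g*n).factorial * n.factorial := mul_dvd_mul_right ih _
      _ ∣ (g*n + n).factorial := h1
      _ = ((g+1) * n).factorial := by rw [Nat.succ_mul]

lemma factorial_add_le (a b : ℕ) : (a + b).factorial ≤ a.factorial * (a+b) ^ b := by
  induction b with
  | zero => simp
  | succ b ih =>
    calc (a + (b+1)).factorial = (a + b + 1) * (a+b).factorial := rfl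
      _ ≤ (a + b + 1) * (a.factorial * (a+b)^b) := Nat.mul_le_mul_left _ ih
      _ ≤ (a + (b+1)) * (a.factorial * (a + (b+1))^b) := by
          apply Nat.mul_le_mul (by omega)
          exact Nat.mul_le_mul_left _ (Nat.pow_le_pow_left (by omega) _)
      _ = a.factorial * (a+(b+1))^(b+1) := by ring

lemma fact_mul_le (u n : ℕ) : (u * n).factorial ≤ u ^ (u * n) * n.factorial ^ u := by
  induction n with
  | zero => simp
  | succ n ih =>
    calc (u * (n+1)).factorial = (u*n + u).factorial := by rw [Nat.mul_succ]
      _ ≤ (u*n).factorial * (u*n+u)^u := factorial_add_le _ _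
      _ = (u*n).factorial * (u^u * (n+1)^u) := by
          rw [show u*n+u = u*(n+1) from by ring, mul_pow]
      _ ≤ (u^(u*n) * n.factorial^u) * (u^u * (n+1)^u) := Nat.mul_le_mul_right _ ih
      _ = (u^(u*n) * u^u) * (n.factorial^u * (n+1)^u) := by ring
      _ = u^(u*(n+1)) * ((n+1).factorial)^u := by
          rw [← pow_add, ← mul_pow, Nat.factorial_succ]
          ring

lemma I_dvd_lcmUpTo_pow {g N M : ℕ} (hg : 1 ≤ g) (hNM : g * N ≤ M) (hM : M < g * (N + 1)) :
    M.factorial / N.factorial ^ g ∣ lcmUpTo M ^ g := by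
  have hdvd : N.factorial ^ g ∣ M.factorial :=
    (fact_pow_dvd g N).trans (Nat.factorial_dvd_factorial hNM)
  set I := M.factorial / N.factorial ^ g with hIdef
  have hIe : N.factorial ^ g * I = M.factorial := Nat.mul_div_cancel' hdvd
  have hI0 : I ≠ 0 := by
    intro h
    rw [h, Nat.mul_zero] at hIe
    exact (Nat.factorial_ne_zero M) hIe.symm
  rcases Nat.eq_zero_or_pos M with hM0 | hM0
  · subst hM0
    have : N.factorial ^ g * I = 1 := hIe
    have : I = 1 := Nat.eq_one_of_mul_eq_one_left this
    simp [this]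
  rw [← Nat.factorization_le_iff_dvd hI0 (pow_ne_zero _ (lcmUpTo_ne_zero M))]
  rw [Finsupp.le_def]
  intro p
  by_cases hp : p.Prime
  swap
  · rw [Nat.factorization_eq_zero_of_not_prime _ hp]
    exact Nat.zero_le _
  haveI := Fact.mk hp
  have hfe : g * (N.factorial.factorization p) + I.factorization p
      = M.factorial.factorization p := by
    rw [← hIe, Nat.factorization_mul (pow_ne_zero _ (Nat.factorial_ne_zero N)) hI0,
      Nat.factorization_pow]
    simp
  set b := Nat.log p M + 1 with hb
  have hvM : M.factorial.factorization p = ∑ i ∈ Finset.Ico 1 b, M / p ^ i := by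
    rw [Nat.factorization_def _ hp]
    exact padicValNat_factorial (by omega)
  have hNleM : N ≤ M := le_trans (Nat.le_mul_of_pos_left N hg) hNM
  have hvN : N.factorial.factorization p = ∑ i ∈ Finset.Ico 1 b, N / p ^ i := by
    rw [Nat.factorization_def _ hp]
    exact padicValNat_factorial (by
      have := Nat.log_mono_right (b := p) hNleM
      omega)
  have hterm : ∀ i ∈ Finset.Ico 1 b, M / p ^ i ≤ g * (N / p ^ i) + g := by
    intro i hi
    have hx : 0 < p ^ i := Nat.pow_pos hp.pos
    have hNx : N < p ^ i * (N / p ^ i) + p ^ i := by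
      have h1 := Nat.div_add_mod N (p ^ i)
      have h2 := Nat.mod_lt N hx
      omega
    have hMlt : M < (g * (N / p ^ i) + g) * p ^ i := by
      calc M < g * (N + 1) := hM
        _ ≤ g * (p ^ i * (N / p ^ i) + p ^ i) := Nat.mul_le_mul_left _ (by omega)
        _ = (g * (N / p ^ i) + g) * p ^ i := by ring
    exact le_of_lt ((Nat.div_lt_iff_lt_mul hx).mpr hMlt)
  have hsum : M.factorial.factorization p
      ≤ g * N.factorial.factorization p + g * (b - 1) := by
    rw [hvM, hvN]
    calc (∑ i ∈ Finset.Ico 1 b, M / p ^ i)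
        ≤ ∑ i ∈ Finset.Ico 1 b, (g * (N / p ^ i) + g) := Finset.sum_le_sum hterm
      _ = g * (∑ i ∈ Finset.Ico 1 b, N / p ^ i) + g * (b - 1) := by
          rw [Finset.sum_add_distrib, ← Finset.mul_sum, Finset.sum_const, Nat.card_Ico,
            smul_eq_mul]
          congr 1
          exact Nat.mul_comm _ _
  have hlog : Nat.log p M ≤ (lcmUpTo M).factorization p :=
    log_le_factorization_lcmUpTo hp hM0
  have hgoal : I.factorization p ≤ g * (lcmUpTo M).factorization p := by
    have h1 : I.factorization p ≤ g * (b-1) := by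
      rw [← hfe] at hsum
      exact Nat.le_of_add_le_add_left hsum
    calc I.factorization p ≤ g * (b - 1) := h1
      _ = g * Nat.log p M := by rw [hb, Nat.add_sub_cancel]
      _ ≤ g * (lcmUpTo M).factorization p := Nat.mul_le_mul_left _ hlog
  rw [Nat.factorization_pow]
  simpa using hgoal


section RpowAux
open Real

lemma aux2 (x : ℝ) (hx : 0 ≤ x) (u : ℕ) (hu : 1 ≤ u) (s : ℝ) :
    (x ^ (u:ℕ)) ^ (s/(u:ℝ)) = x ^ s := by
  have hu0 : ((u:ℝ)) ≠ 0 := by positivity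
  rw [← Real.rpow_natCast x u, ← Real.rpow_mul hx]
  congr 1
  field_simp

lemma aux1 (u n : ℕ) (hu : 1 ≤ u) (s : ℝ) :
    (((u:ℝ)) ^ (u*n : ℕ)) ^ (s/(u:ℝ)) = ((u:ℝ) ^ s) ^ n := by
  have hu0 : ((u:ℝ)) ≠ 0 := by positivity
  rw [← Real.rpow_natCast (u:ℝ) (u*n), ← Real.rpow_mul (by positivity)]
  rw [← Real.rpow_natCast ((u:ℝ) ^ s) n, ← Real.rpow_mul (by positivity)]
  congr 1
  push_cast
  field_simp

lemma one_le_upow {u : ℕ} (hu : 1 ≤ u) (t : ℝ) (ht : 0 ≤ t) : (1:ℝ) ≤ ((u:ℝ)) ^ t :=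
  Real.one_le_rpow (by exact_mod_cast hu) ht

lemma rpow_fact_le₁ (u n : ℕ) (hu : 1 ≤ u) (s : ℝ) :
    (n.factorial : ℝ) ^ s ≤ ((u:ℝ) ^ |s|) ^ n * ((u*n).factorial : ℝ) ^ (s / (u:ℝ)) := by
  set A : ℝ := (n.factorial : ℝ) with hA
  set B : ℝ := ((u*n).factorial : ℝ) with hB
  have hA1 : (1:ℝ) ≤ A := by
    rw [hA]; exact_mod_cast Nat.one_le_iff_ne_zero.mpr (Nat.factorial_ne_zero n)
  have hB1 : (1:ℝ) ≤ B := by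
    rw [hB]; exact_mod_cast Nat.one_le_iff_ne_zero.mpr (Nat.factorial_ne_zero _)
  have hu0 : (0:ℝ) < u := by positivity
  have hAB : A ^ (u:ℕ) ≤ B := by
    rw [hA, hB]; exact_mod_cast Nat.le_of_dvd (Nat.factorial_pos _) (fact_pow_dvd u n)
  have hBA : B ≤ ((u:ℝ)) ^ (u*n : ℕ) * A ^ (u:ℕ) := by
    rw [hA, hB]; exact_mod_cast fact_mul_le u n
  rcases le_or_gt 0 s with hs | hs
  · have h1 : A ^ s = (A ^ (u:ℕ)) ^ (s/(u:ℝ)) := (aux2 A (by linarith) u hu s).symm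
    have h2 : (A ^ (u:ℕ)) ^ (s/(u:ℝ)) ≤ B ^ (s/(u:ℝ)) :=
      Real.rpow_le_rpow (by positivity) hAB (by positivity)
    have h3 : (1:ℝ) ≤ ((u:ℝ) ^ |s|) ^ n := one_le_pow₀ (one_le_upow hu _ (abs_nonneg s))
    calc A ^ s ≤ B ^ (s/(u:ℝ)) := h1 ▸ h2
      _ ≤ ((u:ℝ) ^ |s|) ^ n * B ^ (s/(u:ℝ)) := le_mul_of_one_le_left (by positivity) h3
  · have hflip : (((u:ℝ)) ^ (u*n : ℕ) * A ^ (u:ℕ)) ^ (s/(u:ℝ)) ≤ B ^ (s/(u:ℝ)) :=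
      Real.rpow_le_rpow_of_nonpos (by positivity) hBA (by
        apply div_nonpos_of_nonpos_of_nonneg <;> linarith)
    have hsplit : (((u:ℝ)) ^ (u*n : ℕ) * A ^ (u:ℕ)) ^ (s/(u:ℝ))
        = ((u:ℝ) ^ s) ^ n * A ^ s := by
      rw [Real.mul_rpow (by positivity) (by positivity), aux1 u n hu s,
        aux2 A (by linarith) u hu s]
    rw [hsplit] at hflip
    have hmul := mul_le_mul_of_nonneg_left hflip (le_of_lt (by positivity :
      (0:ℝ) < ((u:ℝ) ^ (-s)) ^ n))
    have hcancel : ((u:ℝ) ^ (-s)) ^ n * (((u:ℝ) ^ s) ^ n * A ^ s) = A ^ s := by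
      rw [← mul_assoc, ← mul_pow, ← Real.rpow_add hu0]
      simp
    rw [hcancel] at hmul
    have habs : |s| = -s := abs_of_neg hs
    calc A ^ s ≤ ((u:ℝ) ^ (-s)) ^ n * B ^ (s/(u:ℝ)) := hmul
      _ = ((u:ℝ) ^ |s|) ^ n * B ^ (s/(u:ℝ)) := by rw [habs]

lemma rpow_fact_le₂ (u n : ℕ) (hu : 1 ≤ u) (s : ℝ) :
    ((u*n).factorial : ℝ) ^ (s / (u:ℝ)) ≤ ((u:ℝ) ^ |s|) ^ n * (n.factorial : ℝ) ^ s := by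
  set A : ℝ := (n.factorial : ℝ) with hA
  set B : ℝ := ((u*n).factorial : ℝ) with hB
  have hA1 : (1:ℝ) ≤ A := by
    rw [hA]; exact_mod_cast Nat.one_le_iff_ne_zero.mpr (Nat.factorial_ne_zero n)
  have hB1 : (1:ℝ) ≤ B := by
    rw [hB]; exact_mod_cast Nat.one_le_iff_ne_zero.mpr (Nat.factorial_ne_zero _)
  have hu0 : (0:ℝ) < u := by positivity
  have hAB : A ^ (u:ℕ) ≤ B := by
    rw [hA, hB]; exact_mod_cast Nat.le_of_dvd (Nat.factorial_pos _) (fact_pow_dvd u n)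
  have hBA : B ≤ ((u:ℝ)) ^ (u*n : ℕ) * A ^ (u:ℕ) := by
    rw [hA, hB]; exact_mod_cast fact_mul_le u n
  rcases le_or_gt 0 s with hs | hs
  · have h2 : B ^ (s/(u:ℝ)) ≤ (((u:ℝ)) ^ (u*n : ℕ) * A ^ (u:ℕ)) ^ (s/(u:ℝ)) :=
      Real.rpow_le_rpow (by positivity) hBA (by positivity)
    have hsplit : (((u:ℝ)) ^ (u*n : ℕ) * A ^ (u:ℕ)) ^ (s/(u:ℝ))
        = ((u:ℝ) ^ s) ^ n * A ^ s := by
      rw [Real.mul_rpow (by positivity) (by positivity), aux1 u n hu s,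
        aux2 A (by linarith) u hu s]
    rw [hsplit] at h2
    calc B ^ (s/(u:ℝ)) ≤ ((u:ℝ) ^ s) ^ n * A ^ s := h2
      _ = ((u:ℝ) ^ |s|) ^ n * A ^ s := by rw [abs_of_nonneg hs]
  · have h2 : B ^ (s/(u:ℝ)) ≤ (A ^ (u:ℕ)) ^ (s/(u:ℝ)) :=
      Real.rpow_le_rpow_of_nonpos (by positivity) hAB (by
        apply div_nonpos_of_nonpos_of_nonneg <;> linarith)
    rw [aux2 A (by linarith) u hu s] at h2
    have h3 : (1:ℝ) ≤ ((u:ℝ) ^ |s|) ^ n := one_le_pow₀ (one_le_upow hu _ (abs_nonneg s))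
    calc B ^ (s/(u:ℝ)) ≤ A ^ s := h2
      _ ≤ ((u:ℝ) ^ |s|) ^ n * A ^ s := le_mul_of_one_le_left (by positivity) h3

end RpowAux


lemma den_one_iff (x : ℚ) : x.den = 1 ↔ ∃ z : ℤ, x = (z:ℚ) :=
  ⟨fun h => ⟨x.num, (Rat.coe_int_num_of_den_eq_one h).symm⟩,
   fun ⟨z, hz⟩ => hz ▸ Rat.den_intCast z⟩

lemma div_den_one {x Φ : ℚ} (hΦ : Φ ≠ 0) : (x / Φ).den = 1 ↔ ∃ z : ℤ, x = (z:ℚ) * Φ := by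
  rw [den_one_iff]
  constructor
  · rintro ⟨z, hz⟩
    exact ⟨z, (div_eq_iff hΦ).mp hz⟩
  · rintro ⟨z, hz⟩
    exact ⟨z, by rw [hz, mul_div_cancel_right₀ _ hΦ]⟩

lemma rat_div_nat_num_den (s : ℚ) (u : ℕ) (hu : 1 ≤ u) :
    (s / (u:ℚ)).num = s.num / (Nat.gcd s.num.natAbs u : ℤ) ∧
    (s / (u:ℚ)).den = s.den * (u / Nat.gcd s.num.natAbs u) := by
  set g := Nat.gcd s.num.natAbs u with hgdef
  have hg : 0 < g := Nat.gcd_pos_of_pos_right _ (by omega)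
  have hgu : g ∣ u := Nat.gcd_dvd_right _ _
  have hga : g ∣ s.num.natAbs := Nat.gcd_dvd_left _ _
  have hgp : (g:ℤ) ∣ s.num := (Int.natCast_dvd_natCast.mpr hga).trans (Int.natAbs_dvd.mpr dvd_rfl)
  set p' : ℤ := s.num / (g:ℤ) with hp'def
  set u' : ℕ := u / g with hu'def
  have hu' : 0 < u' := Nat.div_pos (Nat.le_of_dvd (by omega) hgu) hg
  set q' : ℕ := s.den * u' with hq'def
  have hsden : 0 < s.den := s.pos
  have hq'pos : 0 < q' := Nat.mul_pos hsden hu'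
  have hb0 : (0:ℤ) < (q' : ℤ) := by exact_mod_cast hq'pos
  have hcop : p'.natAbs.Coprime ((q':ℤ)).natAbs := by
    have h1 : p'.natAbs = s.num.natAbs / g := by
      rw [hp'def, Int.natAbs_ediv_of_dvd hgp, Int.natAbs_natCast]
    have h2 : ((q':ℤ)).natAbs = q' := Int.natAbs_natCast q'
    rw [h1, h2, hq'def]
    have c1 : (s.num.natAbs / g).Coprime s.den :=
      Nat.Coprime.coprime_dvd_left (Nat.div_dvd_of_dvd hga) s.reduced
    have c2 : (s.num.natAbs / g).Coprime u' := Nat.coprime_div_gcd_div_gcd hg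
    exact Nat.Coprime.mul_right c1 c2
  have key : s / (u:ℚ) = ((p' : ℚ)) / (((q':ℤ) : ℚ)) := by
    have hnum : ((s.num : ℚ)) = (p':ℚ) * (g:ℚ) := by exact_mod_cast (Int.ediv_mul_cancel hgp).symm
    have huq : ((u:ℕ):ℚ) = ((u':ℕ):ℚ) * ((g:ℕ):ℚ) := by exact_mod_cast (Nat.div_mul_cancel hgu).symm
    have hg0 : ((g:ℕ):ℚ) ≠ 0 := by positivity
    have hden0 : ((s.den:ℕ):ℚ) ≠ 0 := by positivity
    have hu'0 : ((u':ℕ):ℚ) ≠ 0 := by positivity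
    rw [show s = (s.num : ℚ) / (s.den : ℚ) from (Rat.num_div_den s).symm]
    rw [div_div, hnum, huq]
    push_cast
    field_simp
    rw [Nat.cast_mul]
    ring
  constructor
  · rw [key]; exact Rat.num_div_eq_of_coprime hb0 hcop
  · rw [key]
    have := Rat.den_div_eq_of_coprime hb0 hcop
    exact_mod_cast this


/-- A sequence `a : ℕ → ℚ` is the coefficient sequence of a series Gevrey of order
`s ∈ ℚ` of arithmetic type: conjugates of `aₙ/(n!)^s` (here absolute values) grow at
most geometrically, and so do the common denominators, the latter interpreted via the
equivalent condition with `(⌊m/q⌋!)^p` where `s = p/q` in lowest terms. -/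
def GevreyArith (s : ℚ) (a : ℕ → ℚ) : Prop :=
  ∃ C : ℝ, 0 < C ∧
    (∀ n : ℕ, |(a n : ℝ)| ≤ C ^ n * ((n.factorial : ℝ) ^ ((s : ℝ)))) ∧
    (∀ n : ℕ, ∃ d : ℕ, 0 < d ∧ (d : ℝ) ≤ C ^ n ∧
      ∀ m ≤ n, ((d : ℚ) * a m / (((m / s.den).factorial : ℚ) ^ s.num)).den = 1)

/-- `f = Σ aₙ zⁿ` is Gevrey of order `s` of arithmetic type iff
`φᵤ f = Σ aₙ z^{un}` is Gevrey of order `s/u` of arithmetic type. -/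
theorem gevreyArith_phi_iff (s : ℚ) (u : ℕ) (hu : 1 ≤ u) (a : ℕ → ℚ) :
    GevreyArith s a ↔
      GevreyArith (s / u) (fun k => if u ∣ k then a (k / u) else 0) := by
  obtain ⟨hnum, hden⟩ := rat_div_nat_num_den s u hu
  set g := Nat.gcd s.num.natAbs u with hgdef
  have hg : 0 < g := Nat.gcd_pos_of_pos_right _ (by omega)
  have hgu : g ∣ u := Nat.gcd_dvd_right _ _
  have hga : g ∣ s.num.natAbs := Nat.gcd_dvd_left _ _
  have hgp : (g:ℤ) ∣ s.num := (Int.natCast_dvd_natCast.mpr hga).trans (Int.natAbs_dvd.mpr dvd_rfl)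
  set q : ℕ := s.den with hqdef
  have hq : 0 < q := s.pos
  set p' : ℤ := s.num / (g:ℤ) with hp'def
  set u' : ℕ := u / g with hu'def
  have hu'pos : 0 < u' := Nat.div_pos (Nat.le_of_dvd (by omega) hgu) hg
  have huu' : g * u' = u := Nat.mul_div_cancel' hgu
  have hpp' : p' * (g:ℤ) = s.num := Int.ediv_mul_cancel hgp
  have hidx : ∀ n : ℕ, (u * n) / (q * u') = (g * n) / q := by
    intro n
    have h1 : u * n = u' * (g * n) := by rw [← huu']; ring
    have h2 : q * u' = u' * q := Nat.mul_comm _ _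
    rw [h1, h2, Nat.mul_div_mul_left _ _ hu'pos]
  have hgNM : ∀ n : ℕ, g * (n / q) ≤ (g * n) / q := fun n => Nat.mul_div_le_mul_div_assoc g n q
  have hMlt : ∀ n : ℕ, (g * n) / q < g * (n / q + 1) := by
    intro n
    rw [Nat.div_lt_iff_lt_mul hq]
    calc g * n < g * (q * (n / q) + q) := by
          have h1 := Nat.div_add_mod n q
          have h2 := Nat.mod_lt n hq
          exact (Nat.mul_lt_mul_left hg).mpr (by omega)
      _ = g * (n / q + 1) * q := by ring
  have keyI : ∀ n : ℕ, ∃ In : ℕ, 0 < In ∧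
      ((n / q).factorial) ^ g * In = ((g * n) / q).factorial ∧
      In ∣ lcmUpTo (g * n) ^ g := by
    intro n
    have hdvd : ((n / q).factorial) ^ g ∣ ((g * n) / q).factorial :=
      (fact_pow_dvd g (n / q)).trans (Nat.factorial_dvd_factorial (hgNM n))
    refine ⟨((g * n) / q).factorial / ((n / q).factorial) ^ g, ?_, Nat.mul_div_cancel' hdvd, ?_⟩
    · exact Nat.div_pos (Nat.le_of_dvd (Nat.factorial_pos _) hdvd)
        (pow_pos (Nat.factorial_pos _) g)
    · exact (I_dvd_lcmUpTo_pow hg (hgNM n) (hMlt n)).trans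
        (pow_dvd_pow_of_dvd (lcmUpTo_dvd_lcmUpTo (Nat.div_le_self _ _)) g)
  choose I hIpos hIe hIdvd using keyI
  have hI0 : ∀ n : ℕ, ((I n : ℚ)) ≠ 0 := fun n => by exact_mod_cast (hIpos n).ne'
  have hΨΦ : ∀ n : ℕ, ((((g*n)/q).factorial : ℚ)) ^ p'
      = (((n/q).factorial : ℚ)) ^ s.num * ((I n : ℚ)) ^ p' := by
    intro n
    have hcast : ((((g*n)/q).factorial : ℚ)) = (((n/q).factorial : ℚ)) ^ (g:ℕ) * (I n : ℚ) := by
      exact_mod_cast congrArg (Nat.cast : ℕ → ℚ) (hIe n).symm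
    rw [hcast, mul_zpow, ← zpow_natCast (((n/q).factorial : ℚ)) g, ← zpow_mul]
    rw [show (g:ℤ) * (p':ℤ) = s.num from by rw [mul_comm]; exact hpp']
  have hΦ0 : ∀ n : ℕ, (((n/q).factorial : ℚ)) ^ s.num ≠ 0 := fun n =>
    zpow_ne_zero _ (by exact_mod_cast (Nat.factorial_pos _).ne')
  have hΨ0 : ∀ n : ℕ, ((((g*n)/q).factorial : ℚ)) ^ p' ≠ 0 := fun n =>
    zpow_ne_zero _ (by exact_mod_cast (Nat.factorial_pos _).ne')
  set t : ℕ := p'.natAbs with htdef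
  have hcastsu : (((s / (u:ℚ)) : ℚ) : ℝ) = (s:ℝ) / (u:ℝ) := by push_cast; ring
  -- the dvd fact for I^t
  have hItw : ∀ K n : ℕ, n ≤ K → I n ^ t ∣ lcmUpTo (g*K) ^ (g*t) := by
    intro K n hn
    have h1 : I n ∣ lcmUpTo (g*K) ^ g :=
      (hIdvd n).trans (pow_dvd_pow_of_dvd (lcmUpTo_dvd_lcmUpTo (Nat.mul_le_mul_left g hn)) g)
    calc I n ^ t ∣ (lcmUpTo (g*K) ^ g) ^ t := pow_dvd_pow_of_dvd h1 t
      _ = lcmUpTo (g*K) ^ (g*t) := by rw [← pow_mul]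
  have hwbound : ∀ K : ℕ, ((lcmUpTo (g*K) ^ (g*t) : ℕ) : ℝ) ≤ ((16:ℝ) ^ (g*g*t)) ^ K := by
    intro K
    have hnat : lcmUpTo (g*K) ^ (g*t) ≤ (16 ^ (g*g*t)) ^ K := by
      calc lcmUpTo (g*K) ^ (g*t) ≤ (16 ^ (g*K)) ^ (g*t) :=
            Nat.pow_le_pow_left (lcmUpTo_le _) _
        _ = (16 ^ (g*g*t)) ^ K := by rw [← pow_mul, ← pow_mul]; ring_nf
    exact_mod_cast hnat
  -- zpow to pow conversions
  have hIzp_pos : 0 ≤ p' → ∀ n : ℕ, ((I n : ℚ)) ^ p' = ((I n ^ t : ℕ) : ℚ) := by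
    intro hp's n
    rw [show p' = (t:ℤ) from by rw [htdef]; exact (Int.natAbs_of_nonneg hp's).symm,
      zpow_natCast]
    push_cast
    ring
  have hIzp_neg : p' < 0 → ∀ n : ℕ,
      (((n/q).factorial : ℚ)) ^ s.num
        = ((((g*n)/q).factorial : ℚ)) ^ p' * ((I n ^ t : ℕ) : ℚ) := by
    intro hp's n
    have ht' : (t:ℤ) = -p' := by
      rw [htdef]; exact Int.ofNat_natAbs_of_nonpos hp's.le
    have h1 : ((I n : ℚ)) ^ p' * ((I n : ℚ)) ^ (t:ℤ) = 1 := by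
      rw [← zpow_add₀ (hI0 n), ht']
      simp
    have h2 : ((I n ^ t : ℕ) : ℚ) = ((I n : ℚ)) ^ (t:ℤ) := by
      rw [zpow_natCast]; push_cast; ring
    rw [hΨΦ n, h2, mul_assoc, h1, mul_one]
  constructor
  · rintro ⟨C, hC, hana, harith⟩
    set C1 : ℝ := max 1 (C * (u:ℝ) ^ |(s:ℝ)|) with hC1def
    set E : ℝ := (16:ℝ) ^ (g*g*t) with hEdef
    have hE1 : (1:ℝ) ≤ E := one_le_pow₀ (by norm_num)
    have hC11 : (1:ℝ) ≤ C1 := le_max_left _ _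
    set C' : ℝ := C1 * E with hC'def
    have hC'1 : (1:ℝ) ≤ C' := one_le_mul_of_one_le_of_one_le hC11 hE1
    have hC'pos : (0:ℝ) < C' := by linarith
    have hCu : C * (u:ℝ) ^ |(s:ℝ)| ≤ C' := by
      calc C * (u:ℝ) ^ |(s:ℝ)| ≤ C1 := le_max_right _ _
        _ ≤ C' := le_mul_of_one_le_right (by linarith) hE1
    have hCC1 : C ≤ C1 := by
      have h1 : (1:ℝ) ≤ (u:ℝ) ^ |(s:ℝ)| := one_le_upow hu _ (abs_nonneg _)
      calc C = C * 1 := (mul_one C).symm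
        _ ≤ C * (u:ℝ) ^ |(s:ℝ)| := by
            apply mul_le_mul_of_nonneg_left h1 hC.le
        _ ≤ C1 := le_max_right _ _
    have hCE : C * E ≤ C' := mul_le_mul_of_nonneg_right hCC1 (by linarith)
    have hCC' : C ≤ C' := le_trans hCC1 (le_mul_of_one_le_right (by linarith) hE1)
    refine ⟨C', hC'pos, ?_, ?_⟩
    · -- analytic
      intro k
      rw [hcastsu]
      by_cases hk : u ∣ k
      · obtain ⟨n, rfl⟩ := hk
        simp only [dvd_mul_right, if_pos, Nat.mul_div_cancel_left n (by omega : 0 < u)]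
        calc |(a n : ℝ)| ≤ C ^ n * ((n.factorial : ℝ) ^ ((s:ℝ))) := hana n
          _ ≤ C ^ n * (((u:ℝ) ^ |(s:ℝ)|) ^ n * (((u*n).factorial : ℝ) ^ ((s:ℝ)/(u:ℝ)))) := by
              apply mul_le_mul_of_nonneg_left (rpow_fact_le₁ u n hu (s:ℝ)) (by positivity)
          _ = (C * (u:ℝ) ^ |(s:ℝ)|) ^ n * (((u*n).factorial : ℝ) ^ ((s:ℝ)/(u:ℝ))) := by
              rw [mul_pow]; ring
          _ ≤ C' ^ (u*n) * (((u*n).factorial : ℝ) ^ ((s:ℝ)/(u:ℝ))) := by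
              apply mul_le_mul_of_nonneg_right ?_ (by positivity)
              calc (C * (u:ℝ) ^ |(s:ℝ)|) ^ n ≤ C' ^ n :=
                    pow_le_pow_left₀ (by positivity) hCu n
                _ ≤ C' ^ (u*n) := pow_le_pow_right₀ hC'1 (Nat.le_mul_of_pos_left n (by omega))
      · simp only [if_neg hk, Rat.cast_zero, abs_zero]
        positivity
    · -- arithmetic
      intro K
      obtain ⟨d, hd0, hdC, hdint⟩ := harith K
      rcases le_or_gt 0 p' with hp's | hp's
      · -- p' ≥ 0 : multiply by w
        set w : ℕ := lcmUpTo (g*K) ^ (g*t) with hwdef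
        have hw0 : 0 < w := pow_pos (Nat.pos_of_ne_zero (lcmUpTo_ne_zero _)) _
        refine ⟨d * w, Nat.mul_pos hd0 hw0, ?_, ?_⟩
        · push_cast
          calc (d:ℝ) * (w:ℝ) ≤ C ^ K * E ^ K := by
                apply mul_le_mul hdC ?_ (by positivity) (by positivity)
                · rw [hEdef]; exact hwbound K
            _ = (C * E) ^ K := (mul_pow _ _ _).symm
            _ ≤ C' ^ K := pow_le_pow_left₀ (by positivity) hCE K
        · intro m hm
          simp only [hden, hnum]
          by_cases hum : u ∣ m
          · obtain ⟨n, rfl⟩ := hum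
            have hn : n ≤ K := le_trans (Nat.le_mul_of_pos_left n (by omega : 0 < u)) hm
            rw [if_pos (dvd_mul_right u n), Nat.mul_div_cancel_left n (by omega : 0 < u),
              hidx n, div_den_one (hΨ0 n)]
            obtain ⟨z, hz⟩ := (div_den_one (hΦ0 n)).mp (hdint n hn)
            have hIw : I n ^ t ∣ w := hItw K n hn
            set c : ℕ := w / I n ^ t with hcdef
            refine ⟨z * (c : ℤ), ?_⟩
            have hwcast : (w : ℚ) = (c : ℚ) * ((I n ^ t : ℕ) : ℚ) := by
              exact_mod_cast (Nat.div_mul_cancel hIw).symm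
            have h1 : ((d * w : ℕ) : ℚ) * a n = ((d:ℚ) * a n) * (w:ℚ) := by push_cast; ring
            rw [h1, hz, hΨΦ n, hIzp_pos hp's n, hwcast]
            push_cast
            ring
          · rw [if_neg hum]
            simp
      · -- p' < 0 : same d
        refine ⟨d, hd0, le_trans hdC (pow_le_pow_left₀ hC.le hCC' K), ?_⟩
        intro m hm
        simp only [hden, hnum]
        by_cases hum : u ∣ m
        · obtain ⟨n, rfl⟩ := hum
          have hn : n ≤ K := le_trans (Nat.le_mul_of_pos_left n (by omega : 0 < u)) hm
          rw [if_pos (dvd_mul_right u n), Nat.mul_div_cancel_left n (by omega : 0 < u),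
            hidx n, div_den_one (hΨ0 n)]
          obtain ⟨z, hz⟩ := (div_den_one (hΦ0 n)).mp (hdint n hn)
          refine ⟨z * ((I n ^ t : ℕ) : ℤ), ?_⟩
          rw [hz, hIzp_neg hp's n]
          push_cast
          ring
        · rw [if_neg hum]
          simp
  · rintro ⟨C, hC, hana, harith⟩
    set B : ℝ := (max 1 C) ^ u with hBdef
    set E : ℝ := (16:ℝ) ^ (g*g*t) with hEdef
    have hE1 : (1:ℝ) ≤ E := one_le_pow₀ (by norm_num)
    have hB1 : (1:ℝ) ≤ B := one_le_pow₀ (le_max_left _ _)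
    have hUs1 : (1:ℝ) ≤ (u:ℝ) ^ |(s:ℝ)| := one_le_upow hu _ (abs_nonneg _)
    set C' : ℝ := B * (u:ℝ) ^ |(s:ℝ)| * E with hC'def
    have hC'pos : (0:ℝ) < C' := by positivity
    have hCB : ∀ K : ℕ, C ^ (u * K) ≤ B ^ K := by
      intro K
      calc C ^ (u*K) ≤ (max 1 C) ^ (u*K) := pow_le_pow_left₀ hC.le (le_max_right _ _) _
        _ = B ^ K := by rw [hBdef, ← pow_mul]
    refine ⟨C', hC'pos, ?_, ?_⟩
    · -- analytic
      intro n
      have h := hana (u*n)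
      rw [hcastsu] at h
      simp only [dvd_mul_right, if_pos, Nat.mul_div_cancel_left n (by omega : 0 < u)] at h
      calc |(a n : ℝ)| ≤ C ^ (u*n) * (((u*n).factorial : ℝ) ^ ((s:ℝ)/(u:ℝ))) := h
        _ ≤ B ^ n * (((u*n).factorial : ℝ) ^ ((s:ℝ)/(u:ℝ))) :=
            mul_le_mul_of_nonneg_right (hCB n) (by positivity)
        _ ≤ B ^ n * (((u:ℝ) ^ |(s:ℝ)|) ^ n * ((n.factorial : ℝ) ^ ((s:ℝ)))) :=
            mul_le_mul_of_nonneg_left (rpow_fact_le₂ u n hu (s:ℝ)) (by positivity)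
        _ = (B * (u:ℝ) ^ |(s:ℝ)|) ^ n * ((n.factorial : ℝ) ^ ((s:ℝ))) := by
            rw [mul_pow]; ring
        _ ≤ C' ^ n * ((n.factorial : ℝ) ^ ((s:ℝ))) := by
            apply mul_le_mul_of_nonneg_right ?_ (by positivity)
            apply pow_le_pow_left₀ (by positivity)
            exact le_mul_of_one_le_right (by positivity) hE1
    · -- arithmetic
      intro K
      obtain ⟨d, hd0, hdC, hdint⟩ := harith (u*K)
      have hdint' : ∀ n ≤ K, ((d : ℚ) * a n /
          ((((g*n)/q).factorial : ℚ) ^ p')).den = 1 := by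
        intro n hn
        have h := hdint (u*n) (Nat.mul_le_mul_left u hn)
        simp only [hden, hnum] at h
        rwa [if_pos (dvd_mul_right u n), Nat.mul_div_cancel_left n (by omega : 0 < u),
          hidx n] at h
      have hdB : (d:ℝ) ≤ B ^ K := le_trans hdC (hCB K)
      rcases le_or_gt 0 p' with hp's | hp's
      · -- p' ≥ 0 : same d
        refine ⟨d, hd0, ?_, ?_⟩
        · calc (d:ℝ) ≤ B ^ K := hdB
            _ ≤ C' ^ K := by
              apply pow_le_pow_left₀ (by positivity)
              calc B = B * 1 := (mul_one B).symm
                _ ≤ B * ((u:ℝ) ^ |(s:ℝ)| * E) := by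
                    apply mul_le_mul_of_nonneg_left ?_ (by positivity)
                    exact one_le_mul_of_one_le_of_one_le hUs1 hE1
                _ = C' := by rw [hC'def]; ring
        · intro m hm
          obtain ⟨z, hz⟩ := (div_den_one (hΨ0 m)).mp (hdint' m hm)
          rw [div_den_one (hΦ0 m)]
          refine ⟨z * ((I m ^ t : ℕ) : ℤ), ?_⟩
          rw [hz, hΨΦ m, hIzp_pos hp's m]
          push_cast
          ring
      · -- p' < 0 : multiply by w
        set w : ℕ := lcmUpTo (g*K) ^ (g*t) with hwdef
        have hw0 : 0 < w := pow_pos (Nat.pos_of_ne_zero (lcmUpTo_ne_zero _)) _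
        refine ⟨d * w, Nat.mul_pos hd0 hw0, ?_, ?_⟩
        · push_cast
          calc (d:ℝ) * (w:ℝ) ≤ B ^ K * E ^ K := by
                apply mul_le_mul hdB ?_ (by positivity) (by positivity)
                · rw [hEdef]; exact hwbound K
            _ = (B * E) ^ K := (mul_pow _ _ _).symm
            _ ≤ C' ^ K := by
              apply pow_le_pow_left₀ (by positivity)
              calc B * E ≤ B * ((u:ℝ) ^ |(s:ℝ)| * E) := by
                    apply mul_le_mul_of_nonneg_left ?_ (by positivity)
                    exact le_mul_of_one_le_left (by linarith) hUs1
                _ = C' := by rw [hC'def]; ring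
        · intro m hm
          obtain ⟨z, hz⟩ := (div_den_one (hΨ0 m)).mp (hdint' m hm)
          rw [div_den_one (hΦ0 m)]
          have hIw : I m ^ t ∣ w := hItw K m hm
          set c : ℕ := w / I m ^ t with hcdef
          refine ⟨z * (c : ℤ), ?_⟩
          have hwcast : (w : ℚ) = (c : ℚ) * ((I m ^ t : ℕ) : ℚ) := by
            exact_mod_cast (Nat.div_mul_cancel hIw).symm
          have h1 : ((d * w : ℕ) : ℚ) * a m = ((d:ℚ) * a m) * (w:ℚ) := by push_cast; ring
          rw [h1, hz, hIzp_neg hp's m, hwcast]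
          push_cast
          ring
end

section
/- Let (a_n) be a sequence in a field K of characteristic 0 and suppose (a_n) satisfies a linear recurrence with polynomial coefficients: P_0(n) a_n + P_1(n+1) a_{n+1} + ⋯ + P_μ(n+μ) a_{n+μ} = 0 for all n, with P_j ∈ K[X] not all zero. Then the sequence (b_n) with b_n = a_n/n! also satisfies a linear recurrence with polynomial coefficients (possibly of different length). -/
/-- A sequence is holonomic (P-recursive) if it satisfies a nontrivial linear recurrence
`P₀(n)aₙ + P₁(n+1)a_{n+1} + ⋯ + P_μ(n+μ)a_{n+μ} = 0` with polynomial coefficients. -/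
def IsPolyRec (K : Type*) [Field K] (a : ℕ → K) : Prop :=
  ∃ μ : ℕ, ∃ P : ℕ → Polynomial K, (∃ j ≤ μ, P j ≠ 0) ∧
    ∀ n : ℕ, ∑ j ∈ Finset.range (μ + 1),
      (P j).eval (((n + j : ℕ) : K)) * a (n + j) = 0

/-- If `(aₙ)` satisfies a linear recurrence with polynomial coefficients, then so does
`(aₙ/n!)`. -/
theorem isPolyRec_div_factorial (K : Type*) [Field K] [CharZero K] (a : ℕ → K)
    (ha : IsPolyRec K a) :
    IsPolyRec K (fun n => a n / (n.factorial : K)) := by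
  obtain ⟨μ, P, ⟨j0, hj0, hP⟩, hrec⟩ := ha
  refine ⟨μ, fun j => P j * descPochhammer K j, ⟨j0, hj0,
    mul_ne_zero hP (monic_descPochhammer K j0).ne_zero⟩, fun n => ?_⟩
  have hkey : ∀ j : ℕ, (descPochhammer K j).eval (((n + j : ℕ) : K)) *
      (a (n + j) / ((n + j).factorial : K)) = a (n + j) / (n.factorial : K) := by
    intro j
    have hfac : (n.factorial : ℕ) * (n + j).descFactorial j = (n + j).factorial := by
      have := Nat.factorial_mul_descFactorial (n := n + j) (k := j) (Nat.le_add_left j n)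
      simpa using this
    rw [descPochhammer_eval_eq_descFactorial]
    have h1 : ((n + j).factorial : K) ≠ 0 := Nat.cast_ne_zero.mpr (Nat.factorial_ne_zero _)
    have h2 : (n.factorial : K) ≠ 0 := Nat.cast_ne_zero.mpr (Nat.factorial_ne_zero _)
    field_simp
    rw [mul_right_comm, ← Nat.cast_mul, Nat.mul_comm, hfac, mul_comm]
  have := hrec n
  calc ∑ j ∈ Finset.range (μ + 1),
      ((P j * descPochhammer K j).eval (((n + j : ℕ) : K))) *
        (a (n + j) / ((n + j).factorial : K))
      = ∑ j ∈ Finset.range (μ + 1),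
        ((P j).eval (((n + j : ℕ) : K)) * a (n + j)) / (n.factorial : K) := by
        refine Finset.sum_congr rfl fun j _ => ?_
        rw [Polynomial.eval_mul, mul_assoc, hkey j, mul_div_assoc]
    _ = 0 := by rw [← Finset.sum_div, hrec n, zero_div]
end

section
/- For all n ≥ 2, Σ_{p ≤ n, p prime} log n ≤ c·n for an absolute constant c; equivalently, the number of primes ≤ n satisfies π(n) · log n = O(n), and hence n^{q·π(n)} ≤ C^n for a constant C depending only on q. -/
open Nat Finset

lemma pi_count_split (n : ℕ) :
    Nat.primeCounting n ≤ Nat.primeCounting (Nat.sqrt n)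
      + #{p ∈ Finset.Ioc (Nat.sqrt n) n | p.Prime} := by
  have hs : Nat.sqrt n ≤ n := Nat.sqrt_le_self n
  rw [Nat.primeCounting, Nat.primeCounting, Nat.primeCounting',
    Nat.count_eq_card_filter_range, Nat.count_eq_card_filter_range]
  have : Finset.range (n + 1) = Finset.range (Nat.sqrt n + 1) ∪ Finset.Ioc (Nat.sqrt n) n := by
    ext x
    simp only [Finset.mem_union, Finset.mem_range, Finset.mem_Ioc]
    omega
  rw [this, Finset.filter_union]
  exact (Finset.card_union_le _ _)

lemma chebyshev_main : ∀ n : ℕ, 2 ≤ n →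
    (Nat.primeCounting n : ℝ) * Real.log n ≤ (4 + 2 * Real.log 4) * n := by
  intro n hn
  set m := Nat.sqrt n with hm
  have hn0 : (0:ℝ) < n := by positivity
  have hlogn : 0 ≤ Real.log n := Real.log_nonneg (by exact_mod_cast hn.trans (le_refl n) |>.trans' (by norm_num))
  -- bound on card of large primes
  set S := {p ∈ Finset.Ioc m n | p.Prime} with hS
  have hprod : (m + 1) ^ S.card ≤ 4 ^ n := by
    calc (m + 1) ^ S.card ≤ ∏ p ∈ S, p := by
          apply Finset.pow_card_le_prod
          intro p hp
          simp only [hS, Finset.mem_filter, Finset.mem_Ioc] at hp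
          omega
      _ ≤ primorial n := by
          apply Finset.prod_le_prod_of_subset_of_one_le'
          · intro p hp
            simp only [hS, Finset.mem_filter, Finset.mem_Ioc, Finset.mem_range] at hp ⊢
            exact ⟨by omega, hp.2⟩
          · intro p hp _
            exact ((Finset.mem_filter.1 hp).2).one_lt.le
      _ ≤ 4 ^ n := primorial_le_4_pow n
  -- take logs
  have hm1 : Real.sqrt n ≤ (m + 1 : ℝ) := by
    have := Nat.lt_succ_sqrt n
    have h2 : (n : ℝ) < ((m + 1 : ℕ) : ℝ) ^ 2 := by
      push_cast
      nlinarith [Nat.lt_succ_sqrt n, (by exact_mod_cast Nat.lt_succ_sqrt n : (n:ℝ) < (m+1) * (m+1))]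
    have := Real.sqrt_lt_sqrt (le_of_lt hn0) h2
    calc Real.sqrt n ≤ Real.sqrt (((m+1:ℕ):ℝ)^2) := Real.sqrt_le_sqrt h2.le
      _ = ((m+1:ℕ):ℝ) := by rw [Real.sqrt_sq (by positivity)]
    push_cast at this ⊢
    linarith
  have hlog_half : (1/2) * Real.log n ≤ Real.log (m + 1 : ℝ) := by
    have : Real.log (Real.sqrt n) ≤ Real.log (m + 1 : ℝ) :=
      Real.log_le_log (Real.sqrt_pos.2 hn0) hm1
    rwa [Real.log_sqrt hn0.le, div_eq_inv_mul, ← one_div] at this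
  have hcard_log : (S.card : ℝ) * ((1/2) * Real.log n) ≤ n * Real.log 4 := by
    have h1 : ((m+1:ℕ):ℝ) ^ S.card ≤ (4:ℝ) ^ n := by exact_mod_cast hprod
    have h2 : Real.log (((m+1:ℕ):ℝ) ^ S.card) ≤ Real.log ((4:ℝ) ^ n) :=
      Real.log_le_log (by positivity) h1
    rw [Real.log_pow, Real.log_pow] at h2
    push_cast at h2 ⊢
    nlinarith [hlog_half, S.card.cast_nonneg (α := ℝ)]
  have hcard : (S.card : ℝ) * Real.log n ≤ 2 * Real.log 4 * n := by nlinarith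
  -- small primes
  have hpim : (Nat.primeCounting m : ℝ) ≤ m + 1 := by
    have : Nat.primeCounting m ≤ m + 1 := by
      rw [Nat.primeCounting, Nat.primeCounting', Nat.count_eq_card_filter_range]
      calc #{x ∈ Finset.range (m+1) | Nat.Prime x} ≤ #(Finset.range (m+1)) :=
            Finset.card_filter_le _ _
        _ = m + 1 := Finset.card_range _
    exact_mod_cast this
  have hlog2sqrt : Real.log n ≤ 2 * Real.sqrt n := by
    have h1 : Real.log (Real.sqrt n) ≤ Real.sqrt n := Real.log_le_sub_one_of_pos
      (Real.sqrt_pos.2 hn0) |>.trans (by linarith)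
    rw [Real.log_sqrt hn0.le] at h1; linarith
  have hmm : (m:ℝ) ^ 2 ≤ n := by exact_mod_cast Nat.sqrt_le' n
  have hmsqrt : (m : ℝ) ≤ Real.sqrt n := by
    rw [show (m:ℝ) = Real.sqrt ((m:ℝ)^2) from (Real.sqrt_sq m.cast_nonneg).symm]
    exact Real.sqrt_le_sqrt (by nlinarith)
  have h1sqrt : (1:ℝ) ≤ Real.sqrt n := by
    rw [show (1:ℝ) = Real.sqrt 1 from (Real.sqrt_one).symm]
    exact Real.sqrt_le_sqrt (by exact_mod_cast hn.trans' (by norm_num))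
  have hsqrt_le : Real.sqrt n ≤ n := by
    nlinarith [Real.sq_sqrt hn0.le, h1sqrt]
  have hsmall : (Nat.primeCounting m : ℝ) * Real.log n ≤ 4 * n := by
    have : (Nat.primeCounting m : ℝ) * Real.log n ≤ (m + 1) * (2 * Real.sqrt n) := by
      apply mul_le_mul hpim hlog2sqrt hlogn (by positivity)
    have h2 : ((m:ℝ) + 1) * (2 * Real.sqrt n) ≤ 2 * Real.sqrt n * (2 * Real.sqrt n) := by
      nlinarith [Real.sqrt_nonneg (n:ℝ)]
    nlinarith [Real.sq_sqrt hn0.le]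
  -- combine
  have hsplit : (Nat.primeCounting n : ℝ) ≤ (Nat.primeCounting m : ℝ) + S.card := by
    exact_mod_cast pi_count_split n
  nlinarith [mul_le_mul_of_nonneg_right hsplit hlogn]

/-- Chebyshev's upper bound: `π(n) · log n = O(n)` (equivalently
`Σ_{p ≤ n} log n ≤ c·n`), and hence for every `q` there is a constant `C` with
`n^{q·π(n)} ≤ Cⁿ` for all `n ≥ 2`. -/
theorem primeCounting_mul_log_bigO :
    (∃ c : ℝ, 0 < c ∧ ∀ n : ℕ, 2 ≤ n →
        (Nat.primeCounting n : ℝ) * Real.log n ≤ c * n) ∧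
      ∀ q : ℕ, ∃ C : ℝ, 0 < C ∧ ∀ n : ℕ, 2 ≤ n →
        ((n : ℝ)) ^ (q * Nat.primeCounting n) ≤ C ^ n := by
  constructor
  · exact ⟨4 + 2 * Real.log 4, by positivity, chebyshev_main⟩
  · intro q
    refine ⟨Real.exp (q * (4 + 2 * Real.log 4)), Real.exp_pos _, fun n hn => ?_⟩
    have hn0 : (0:ℝ) < n := by positivity
    have h := chebyshev_main n hn
    have hkey : (n : ℝ) ^ (q * Nat.primeCounting n)
        = Real.exp ((q * Nat.primeCounting n : ℕ) * Real.log n) := by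
      rw [← Real.log_pow, Real.exp_log (by positivity)]
    rw [hkey, ← Real.exp_nat_mul]
    apply Real.exp_le_exp.2
    have hq : (0:ℝ) ≤ q := q.cast_nonneg
    have hπ : (0:ℝ) ≤ (Nat.primeCounting n : ℝ) := by positivity
    push_cast
    nlinarith [h, Real.log_nonneg (by exact_mod_cast hn.trans' (by norm_num) : (1:ℝ) ≤ n)]
end

section
/- The least common multiple of 1, 2, …, n satisfies log lcm(1,…,n) = O(n); equivalently, there is a constant C such that lcm(1,…,n) ≤ C^n for all n ≥ 1. -/
open Real Chebyshev
open Nat (lcmUpto lcmUpto_pos)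

/-- Chebyshev-type bound: `lcm(1, …, n)` grows at most exponentially, i.e.
there is `C` with `lcm(1,…,n) ≤ Cⁿ` for all `n ≥ 1`
(equivalently `log lcm(1,…,n) = O(n)`). -/
theorem lcm_range_le_pow :
    ∃ C : ℝ, 0 < C ∧ ∀ n : ℕ, 1 ≤ n →
      (((Finset.Icc 1 n).lcm id : ℕ) : ℝ) ≤ C ^ n := by
  refine ⟨exp (log 4 + 4), exp_pos _, fun n _ => ?_⟩
  have hpsi : log (lcmUpto n) ≤ (log 4 + 4) * n :=
    psi_eq_log_lcmUpto n ▸ psi_le_const_mul_self n.cast_nonneg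
  calc ((lcmUpto n : ℕ) : ℝ) = exp (log (lcmUpto n)) := by
        rw [exp_log (mod_cast lcmUpto_pos n)]
    _ ≤ exp ((log 4 + 4) * n) := exp_le_exp.mpr hpsi
    _ = exp (log 4 + 4) ^ n := by rw [← exp_nat_mul, mul_comm]
end

section
/- For rational numbers α with −α−1 not an integer in {0,…,n}, one has the identity Σ_{m=0}^{n} (−1)^m / (m! (n−m)! (m+α+1)) = 1/((α+1)_{n+1}), where (α+1)_{n+1} = (α+1)(α+2)⋯(α+n+1) is the Pochhammer symbol. -/
/-!
With `x = α + 1` and `T n x = Σ_{m ≤ n} (-1)^m / (m! (n-m)! (x+m))`, splitting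
`n + 1 = (n + 1 - m) + m` in the numerators of `T (n+1) x` gives the recurrence
`(n + 1) T (n+1) x = T n x - T n (x+1)`. The reciprocals of the Pochhammer symbols satisfy the
same recurrence, because `(x)_{n+2} = (x)_{n+1} (x+n+1) = x (x+1)_{n+1}` gives
`1/(x)_{n+1} - 1/(x+1)_{n+1} = (n+1)/(x)_{n+2}`; induction on `n` finishes.
-/

open Finset Polynomial Nat

section

variable {K : Type*} [Field K]

theorem ascPochhammer_succ_eval_eq_mul_eval_add_one (n : ℕ) (x : K) :
    (ascPochhammer K (n + 1)).eval x = x * (ascPochhammer K n).eval (x + 1) := by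
  simp [ascPochhammer_succ_left, eval_comp]

theorem inv_ascPochhammer_eval_sub_inv_ascPochhammer_eval_add_one (n : ℕ) (x : K)
    (hx : (ascPochhammer K (n + 2)).eval x ≠ 0) :
    1 / (ascPochhammer K (n + 1)).eval x - 1 / (ascPochhammer K (n + 1)).eval (x + 1) =
      (n + 1) / (ascPochhammer K (n + 2)).eval x := by
  have hright := ascPochhammer_succ_eval (n + 1) x
  have hleft := ascPochhammer_succ_eval_eq_mul_eval_add_one (n + 1) x
  rw [hright] at hx
  have hleft_ne : (ascPochhammer K (n + 1)).eval (x + 1) ≠ 0 := by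
    rw [hright] at hleft
    exact right_ne_zero_of_mul (hleft ▸ hx)
  rw [div_sub_div _ _ (left_ne_zero_of_mul hx) hleft_ne, div_eq_div_iff
    (mul_ne_zero (left_ne_zero_of_mul hx) hleft_ne) (hright ▸ hx)]
  push_cast at hright hleft
  linear_combination (ascPochhammer K (n + 1)).eval (x + 1) * hright
    - (ascPochhammer K (n + 1)).eval x * hleft

noncomputable def partialFractionTerm (n : ℕ) (x : K) (m : ℕ) : K :=
  (-1) ^ m / (m ! * (n - m)! * (x + m))

variable [CharZero K]

theorem sub_mul_partialFractionTerm_succ {n m : ℕ} (hm : m ≤ n) (x : K) :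
    ((n + 1 : K) - m) * partialFractionTerm (n + 1) x m = partialFractionTerm n x m := by
  have hfac : ((n + 1 - m)! : K) = ((n - m : ℕ) + 1 : K) * (n - m)! := by
    rw [show n + 1 - m = n - m + 1 by omega, factorial_succ]
    push_cast
    ring
  have hcoeff : (n + 1 : K) - m = (n - m : ℕ) + 1 := by
    rw [Nat.cast_sub hm]
    ring
  simp only [partialFractionTerm]
  rw [hfac, hcoeff, mul_div_assoc', show (m ! : K) * (((n - m : ℕ) + 1) * (n - m)!) * (x + m) =
    ((n - m : ℕ) + 1) * (m ! * (n - m)! * (x + m)) by ring,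
    mul_div_mul_left _ _ (Nat.cast_add_one_ne_zero _)]

theorem succ_mul_partialFractionTerm_succ_succ (n m : ℕ) (x : K) :
    ((m + 1 : ℕ) : K) * partialFractionTerm (n + 1) x (m + 1) =
      -partialFractionTerm n (x + 1) m := by
  simp only [partialFractionTerm, factorial_succ, Nat.add_sub_add_right]
  rw [mul_div_assoc', show ((m + 1) * m ! : ℕ) * ((n - m)! : K) * (x + (m + 1 : ℕ)) =
    (m + 1 : ℕ) * (m ! * (n - m)! * (x + 1 + m)) by push_cast; ring,
    mul_div_mul_left _ _ (Nat.cast_ne_zero.mpr m.succ_ne_zero), pow_succ, mul_neg_one, neg_div]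

theorem succ_mul_sum_partialFractionTerm_succ (n : ℕ) (x : K) :
    (n + 1 : K) * ∑ m ∈ range (n + 2), partialFractionTerm (n + 1) x m =
      ∑ m ∈ range (n + 1), partialFractionTerm n x m -
        ∑ m ∈ range (n + 1), partialFractionTerm n (x + 1) m := by
  have hsplit : ∀ m ∈ range (n + 2), (n + 1 : K) * partialFractionTerm (n + 1) x m =
      ((n + 1 : K) - m) * partialFractionTerm (n + 1) x m +
        (m : K) * partialFractionTerm (n + 1) x m := fun m _ => by ring
  have hfirst : ∑ m ∈ range (n + 2), ((n + 1 : K) - m) * partialFractionTerm (n + 1) x m =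
      ∑ m ∈ range (n + 1), partialFractionTerm n x m := by
    rw [sum_range_succ, Nat.cast_add_one, sub_self, zero_mul, add_zero]
    exact sum_congr rfl fun m hm =>
      sub_mul_partialFractionTerm_succ (Nat.lt_succ_iff.mp (mem_range.mp hm)) x
  have hsecond : ∑ m ∈ range (n + 2), (m : K) * partialFractionTerm (n + 1) x m =
      -∑ m ∈ range (n + 1), partialFractionTerm n (x + 1) m := by
    rw [sum_range_succ', Nat.cast_zero, zero_mul, add_zero, ← sum_neg_distrib]
    exact sum_congr rfl fun m _ => succ_mul_partialFractionTerm_succ_succ n m x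
  rw [mul_sum, sum_congr rfl hsplit, sum_add_distrib, hfirst, hsecond, sub_eq_add_neg]

theorem sum_partialFractionTerm (n : ℕ) (x : K) (hx : (ascPochhammer K (n + 1)).eval x ≠ 0) :
    ∑ m ∈ range (n + 1), partialFractionTerm n x m = 1 / (ascPochhammer K (n + 1)).eval x := by
  induction n generalizing x with
  | zero => simp [partialFractionTerm]
  | succ n ih =>
    have hx_ne : (ascPochhammer K (n + 1)).eval x ≠ 0 := by
      rw [ascPochhammer_succ_eval] at hx
      exact left_ne_zero_of_mul hx
    have hx_add_one_ne : (ascPochhammer K (n + 1)).eval (x + 1) ≠ 0 := by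
      rw [ascPochhammer_succ_eval_eq_mul_eval_add_one] at hx
      exact right_ne_zero_of_mul hx
    have hrec := succ_mul_sum_partialFractionTerm_succ n x
    rw [ih x hx_ne, ih (x + 1) hx_add_one_ne,
      inv_ascPochhammer_eval_sub_inv_ascPochhammer_eval_add_one n x hx] at hrec
    rw [← mul_right_inj' (Nat.cast_add_one_ne_zero n), hrec]
    field_simp

end

/-- Partial-fraction identity: for rational `α` with `−α−1` not an integer in
`{0, …, n}`,
`Σ_{m=0}^{n} (−1)^m / (m!(n−m)!(m+α+1)) = 1/((α+1)_{n+1})`. -/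
theorem sum_inv_factorial_eq_inv_ascPochhammer (n : ℕ) (α : ℚ)
    (h : ∀ m : ℕ, m ≤ n → α + m + 1 ≠ 0) :
    ∑ m ∈ Finset.range (n + 1),
        (-1 : ℚ) ^ m / ((m.factorial : ℚ) * ((n - m).factorial : ℚ) * (α + m + 1))
      = 1 / (ascPochhammer ℚ (n + 1)).eval (α + 1) := by
  have hpoch : (ascPochhammer ℚ (n + 1)).eval (α + 1) ≠ 0 := by
    rw [ne_eq, ascPochhammer_eval_eq_zero_iff]
    rintro ⟨k, hk, hroot⟩
    exact h k (Nat.lt_succ_iff.mp hk) (by linarith)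
  rw [← sum_partialFractionTerm n (α + 1) hpoch]
  refine sum_congr rfl fun m _ => ?_
  rw [partialFractionTerm, add_right_comm]
end
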